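/- arXiv:2411.03366 — 9 statements merged into one kernel-verified Lean document; each statement's English description precedes it below -/
import Mathlib

section
/- For any subset I ⊆ {1,…,m}, the family (a_i)_{i ∈ I} is linearly independent in W* if and only if the set {γ_j : j ∉ I} spans V*. -/
open Submodule Set

/-! Linear independence of the coordinate functionals `a i`, `i ∈ I`, on `W` means that restriction
to the coordinates in `I` maps `W` onto `ℝ^I`, i.e. `W + ker res_I = ℝ^m`. As `W = ker Γ`, this
holds iff `Γ (ker res_I) = span {γ j | j ∉ I}` contains `range Γ = span (range γ) = V*`. -/

theorem map_linearCombination_ker_funLeft {R ι M : Type*} [Semiring R] [Fintype ι]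
    [AddCommMonoid M] [Module R M] (γ : ι → M) (I : Set ι) :
    (LinearMap.ker (LinearMap.funLeft R R ((↑) : I → ι))).map (Fintype.linearCombination R γ) =
      span R (γ '' Iᶜ) := by
  classical
  refine le_antisymm (map_le_iff_le_comap.mpr fun y hy => ?_) (span_le.mpr ?_)
  · have hyI : ∀ i ∈ I, y i = 0 := fun i hi => congrFun hy ⟨i, hi⟩
    rw [mem_comap, Fintype.linearCombination_apply]
    refine sum_mem fun j _ => ?_
    by_cases hj : j ∈ I
    · simp [hyI j hj]
    · exact smul_mem _ _ (subset_span ⟨j, hj, rfl⟩)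
  · rintro _ ⟨j, hj, rfl⟩
    refine ⟨Pi.single j 1, funext fun i => ?_, by simp⟩
    exact Pi.single_eq_of_ne (ne_of_mem_of_not_mem i.2 hj) _

theorem linearIndependent_coord_ker_linearCombination_iff {K ι M : Type*} [Field K] [Fintype ι]
    [AddCommGroup M] [Module K M] (γ : ι → M) (I : Set ι) :
    LinearIndependent K (fun (i : I) (w : LinearMap.ker (Fintype.linearCombination K γ)) =>
        (w : ι → K) i) ↔
      span K (range γ) ≤ span K (γ '' Iᶜ) := by
  set res := LinearMap.funLeft K K ((↑) : I → ι)
  have hres : LinearMap.range res = ⊤ := LinearMap.range_eq_top.mpr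
    (LinearMap.funLeft_surjective_of_injective _ _ _ Subtype.val_injective)
  rw [← span_flip_eq_top_iff_linearIndependent]
  change span K (range (res ∘ₗ (LinearMap.ker (Fintype.linearCombination K γ)).subtype)) = ⊤ ↔ _
  rw [← LinearMap.coe_range, span_eq, LinearMap.range_comp, range_subtype,
    LinearMap.map_eq_top_iff hres, sup_comm, ← comap_map_eq, map_linearCombination_ker_funLeft,
    ← LinearMap.range_le_iff_comap, Fintype.range_linearCombination]

theorem ContinuousLinearMap.linearIndependent_coeFn_iff {ι R M N : Type*} [CommSemiring R]
    [TopologicalSpace M] [AddCommMonoid M] [Module R M] [TopologicalSpace N] [AddCommMonoid N]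
    [Module R N] [ContinuousAdd N] [ContinuousConstSMul R N] (f : ι → M →L[R] N) :
    LinearIndependent R (fun i => ⇑(f i)) ↔ LinearIndependent R f :=
  (LinearMap.ltoFun R M N R ∘ₗ coeLM R).linearIndependent_iff_of_injOn
    (Function.Injective.injOn fun _ _ h => coe_injective (DFunLike.coe_injective h))

theorem stmt1_general {V : Type*} [NormedAddCommGroup V] [NormedSpace ℝ V]
    {m : ℕ} (γ : Fin m → (V →L[ℝ] ℝ))
    (hspan : Submodule.span ℝ (Set.range γ) = ⊤)
    (W : Submodule ℝ (Fin m → ℝ))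
    (hW : ∀ y : Fin m → ℝ, y ∈ W ↔ ∑ i, y i • γ i = 0)
    (a : Fin m → (W →L[ℝ] ℝ))
    (ha : ∀ (i : Fin m) (w : W), a i w = (w : Fin m → ℝ) i)
    (I : Set (Fin m)) :
    LinearIndependent ℝ (fun i : I => a i.1) ↔
      Submodule.span ℝ (γ '' Iᶜ) = ⊤ := by
  obtain rfl : W = LinearMap.ker (Fintype.linearCombination ℝ γ) := Submodule.ext hW
  have ha' : (fun i : I => ⇑(a i)) = fun (i : I) (w : LinearMap.ker _) => (w : Fin m → ℝ) i :=
    funext fun i => funext (ha i)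
  rw [← ContinuousLinearMap.linearIndependent_coeFn_iff, ha',
    linearIndependent_coord_ker_linearCombination_iff, hspan, top_le_iff]

/-- Gale duality: for any `I ⊆ {1,…,m}`, the family `(a i)_{i ∈ I}`
is linearly independent in `W*` iff `{γ j : j ∉ I}` spans `V*`. -/
theorem stmt1 {V : Type*} [NormedAddCommGroup V] [NormedSpace ℝ V]
    [FiniteDimensional ℝ V] {m : ℕ} (γ : Fin m → (V →L[ℝ] ℝ))
    (hspan : Submodule.span ℝ (Set.range γ) = ⊤)
    (W : Submodule ℝ (Fin m → ℝ))
    (hW : ∀ y : Fin m → ℝ, y ∈ W ↔ ∑ i, y i • γ i = 0)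
    (a : Fin m → (W →L[ℝ] ℝ))
    (ha : ∀ (i : Fin m) (w : W), a i w = (w : Fin m → ℝ) i)
    (I : Set (Fin m)) :
    LinearIndependent ℝ (fun i : I => a i.1) ↔
      Submodule.span ℝ (γ '' Iᶜ) = ⊤ :=
  stmt1_general γ hspan W hW a ha I
end

section
/- Let K be a simplicial complex on {1,…,m}. The following two conditions are equivalent: (b) for any two distinct I, J ∈ K, relint(cone{a_i : i ∈ I}) ∩ relint(cone{a_j : j ∈ J}) = ∅; (c) for any I, J ∈ K, relint(cone{γ_i : i ∉ I}) ∩ relint(cone{γ_j : j ∉ J}) ≠ ∅. -/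
/-- The cone generated by the vectors `v i` for `i ∈ I`: all nonnegative linear
combinations of the `v i`, `i ∈ I`. -/
def coneOf {E : Type*} [AddCommGroup E] [Module ℝ E] {m : ℕ}
    (v : Fin m → E) (I : Set (Fin m)) : Set E :=
  {x | ∃ c : Fin m → ℝ, (∀ i, 0 ≤ c i) ∧ (∀ i ∉ I, c i = 0) ∧ x = ∑ i, c i • v i}

/-!
A point lies in the relative interior of `cone{v i : i ∈ I}` iff it is a combination of the `v i`
with coefficients positive exactly on `I`. Hence the relative interiors for `I` and `J` meet iff
some linear dependence of the `v i` is positive on `I \ J`, negative on `J \ I` and zero off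
`I ∪ J`. The dependences of the `γ i` are the vectors of `W`, those of the `a i` the vectors
orthogonal to `W`.

(c) ⇒ (b): a dependence of the `a i` with the pattern of `(I, J)` and a vector of `W` with the
pattern of `(Iᶜ, Jᶜ)` are orthogonal, yet their inner product is negative when `I ≠ J`.
(b) ⇒ (c): if `W` has no vector with the pattern of `(Iᶜ, Jᶜ)`, Hahn–Banach gives a weakly signed
dependence of the `a i`; its strict signs single out faces `I' ⊆ I`, `J' ⊆ J` whose relative
interiors meet.
-/

open Set Filter Topology
open scoped symmDiff

theorem mem_intrinsicInterior_iff_exists_nhds {E : Type*} [TopologicalSpace E] [AddCommGroup E]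
    [Module ℝ E] {s : Set E} {x : E} :
    x ∈ intrinsicInterior ℝ s ↔ x ∈ affineSpan ℝ s ∧ ∃ U ∈ 𝓝 x, U ∩ affineSpan ℝ s ⊆ s := by
  simp only [mem_intrinsicInterior, mem_interior_iff_mem_nhds]
  constructor
  · rintro ⟨y, hy, rfl⟩
    obtain ⟨U, hU, hUs⟩ := (mem_nhds_subtype _ _ _).1 hy
    exact ⟨y.2, U, hU, fun z hz => hUs (a := ⟨z, hz.2⟩) hz.1⟩
  · rintro ⟨hx, U, hU, hUs⟩
    exact ⟨⟨x, hx⟩, (mem_nhds_subtype _ _ _).2 ⟨U, hU, fun z hz => hUs ⟨hz, z.2⟩⟩, rfl⟩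

def HasSignPattern {ι : Type*} (u : ι → ℝ) (I J : Set ι) : Prop :=
  (∀ i ∈ I \ J, 0 < u i) ∧ (∀ i ∈ J \ I, u i < 0) ∧ ∀ i ∉ I ∪ J, u i = 0

theorem hasSignPattern_compl_iff {ι : Type*} {u : ι → ℝ} {I J : Set ι} :
    HasSignPattern u Iᶜ Jᶜ ↔
      (∀ i ∈ J \ I, 0 < u i) ∧ (∀ i ∈ I \ J, u i < 0) ∧ ∀ i ∈ I ∩ J, u i = 0 := by
  simp [HasSignPattern, and_comm, not_or]

namespace HasSignPattern

variable {ι : Type*} {u : ι → ℝ} {I J : Set ι}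

theorem neg (h : HasSignPattern u I J) : HasSignPattern (-u) J I :=
  ⟨fun i hi => neg_pos.2 (h.2.1 i hi), fun i hi => neg_neg_of_pos (h.1 i hi),
    fun i hi => by simp [h.2.2 i (union_comm I J ▸ hi)]⟩

theorem max_add_indicator_pos (h : HasSignPattern u I J) {i : ι} (hi : i ∈ I) :
    0 < max (u i) 0 + (I ∩ J).indicator 1 i := by
  by_cases hj : i ∈ J
  · simp [hi, hj, add_pos_of_nonneg_of_pos]
  · simp [hi, hj, h.1 i ⟨hi, hj⟩]

theorem max_add_indicator_eq_zero (h : HasSignPattern u I J) {i : ι} (hi : i ∉ I) :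
    max (u i) 0 + (I ∩ J).indicator 1 i = 0 := by
  have hu : u i ≤ 0 := by
    by_cases hj : i ∈ J
    · exact (h.2.1 i ⟨hj, hi⟩).le
    · exact (h.2.2 i fun h' => h'.elim hi hj).le
  simp [hi, hu]

theorem sum_mul_neg [Fintype ι] {y w : ι → ℝ} (hy : HasSignPattern y I J)
    (hw : HasSignPattern w Iᶜ Jᶜ) (hIJ : I ≠ J) : ∑ i, y i * w i < 0 := by
  obtain ⟨hwJ, hwI, hw0⟩ := hasSignPattern_compl_iff.1 hw
  have hle : ∀ i, y i * w i ≤ 0 := fun i => by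
    by_cases hI : i ∈ I <;> by_cases hJ : i ∈ J
    · simp [hw0 i ⟨hI, hJ⟩]
    · exact (mul_neg_of_pos_of_neg (hy.1 i ⟨hI, hJ⟩) (hwI i ⟨hI, hJ⟩)).le
    · exact (mul_neg_of_neg_of_pos (hy.2.1 i ⟨hJ, hI⟩) (hwJ i ⟨hJ, hI⟩)).le
    · simp [hy.2.2 i (by simp [hI, hJ])]
  obtain ⟨i, hi⟩ : (I ∆ J).Nonempty :=
    nonempty_iff_ne_empty.2 fun h => hIJ (symmDiff_eq_bot.1 h)
  have hlt : y i * w i < 0 := by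
    rcases mem_symmDiff.1 hi with ⟨hI, hJ⟩ | ⟨hJ, hI⟩
    · exact mul_neg_of_pos_of_neg (hy.1 i ⟨hI, hJ⟩) (hwI i ⟨hI, hJ⟩)
    · exact mul_neg_of_neg_of_pos (hy.2.1 i ⟨hJ, hI⟩) (hwJ i ⟨hJ, hI⟩)
  simpa using Finset.sum_lt_sum (fun i _ => hle i) ⟨i, Finset.mem_univ i, hlt⟩

end HasSignPattern

theorem exists_hasSignPattern_of_nonneg_of_nonpos {ι : Type*} {I J : Set ι} {y : ι → ℝ}
    (hpos : ∀ i ∈ I \ J, 0 ≤ y i) (hneg : ∀ i ∈ J \ I, y i ≤ 0) (hzero : ∀ i ∉ I ∪ J, y i = 0)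
    (hne : ∃ i ∈ I ∆ J, y i ≠ 0) :
    ∃ I' ⊆ I, ∃ J' ⊆ J, I' ≠ J' ∧ HasSignPattern y I' J' := by
  refine ⟨{i ∈ I | i ∈ J ∨ 0 < y i}, fun i hi => hi.1, {i ∈ J | i ∈ I ∨ y i < 0},
    fun i hi => hi.1, ?_, fun i ⟨⟨hI, hy⟩, hJ⟩ => hy.resolve_left fun h => hJ ⟨h, Or.inl hI⟩,
    fun i ⟨⟨hJ, hy⟩, hI⟩ => hy.resolve_left fun h => hI ⟨h, Or.inl hJ⟩, fun i hi => ?_⟩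
  · obtain ⟨i, hi, hyi⟩ := hne
    intro heq
    rcases mem_symmDiff.1 hi with ⟨hI, hJ⟩ | ⟨hJ, hI⟩
    · have : i ∈ {i ∈ I | i ∈ J ∨ 0 < y i} :=
        ⟨hI, Or.inr (lt_of_le_of_ne (hpos i ⟨hI, hJ⟩) hyi.symm)⟩
      exact hJ (heq ▸ this).1
    · have : i ∈ {i ∈ J | i ∈ I ∨ y i < 0} := ⟨hJ, Or.inr (lt_of_le_of_ne (hneg i ⟨hJ, hI⟩) hyi)⟩
      exact hI (heq ▸ this).1
  · simp only [mem_union, mem_sep_iff, not_or, not_and] at hi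
    by_cases hI : i ∈ I <;> by_cases hJ : i ∈ J
    · exact absurd hJ (hi.1 hI).1
    · exact le_antisymm (not_lt.1 (hi.1 hI).2) (hpos i ⟨hI, hJ⟩)
    · exact le_antisymm (hneg i ⟨hJ, hI⟩) (not_lt.1 (hi.2 hJ).2)
    · exact hzero i (by simp [hI, hJ])

theorem Fintype.linearCombination_indicator_apply {ι R M : Type*} [Fintype ι] [Semiring R]
    [AddCommMonoid M] [Module R M] (v : ι → M) (I : Set ι) (c : ι → R) :
    Fintype.linearCombination R (I.indicator v) c = ∑ i, I.indicator c i • v i := by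
  simp only [Fintype.linearCombination_apply, ← indicator_smul_apply, indicator_smul_apply_left]

theorem Fintype.linearCombination_indicator_of_forall_notMem {ι R M : Type*} [Fintype ι]
    [Semiring R] [AddCommMonoid M] [Module R M] (v : ι → M) {I : Set ι} {c : ι → R}
    (hc : ∀ i ∉ I, c i = 0) : Fintype.linearCombination R (I.indicator v) c = ∑ i, c i • v i := by
  rw [linearCombination_indicator_apply, indicator_eq_self.2 fun i hi => ?_]
  by_contra hI
  exact hi (hc i hI)

section Cone

variable {E : Type*} [AddCommGroup E] [Module ℝ E] {m : ℕ} (v : Fin m → E)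

theorem zero_mem_coneOf (I : Set (Fin m)) : (0 : E) ∈ coneOf v I :=
  ⟨0, fun _ => le_rfl, fun _ _ => rfl, by simp⟩

theorem sum_indicator_smul_mem_coneOf {I : Set (Fin m)} {c : Fin m → ℝ}
    (hc : ∀ i ∈ I, 0 ≤ c i) :
    ∑ i, I.indicator c i • v i ∈ coneOf v I := by
  refine ⟨I.indicator c, fun i => ?_, fun i hi => indicator_of_notMem hi c, rfl⟩
  by_cases hi : i ∈ I
  · simpa [hi] using hc i hi
  · simp [hi]

theorem coneOf_subset_range (I : Set (Fin m)) :
    coneOf v I ⊆ LinearMap.range (Fintype.linearCombination ℝ (I.indicator v)) := by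
  rintro x ⟨c, -, hc, rfl⟩
  exact ⟨c, Fintype.linearCombination_indicator_of_forall_notMem v hc⟩

end Cone

section ConeInterior

variable {E : Type*} [NormedAddCommGroup E] [NormedSpace ℝ E] {m : ℕ} (v : Fin m → E)

theorem sum_smul_mem_intrinsicInterior_coneOf {I : Set (Fin m)} {c : Fin m → ℝ}
    (hc : ∀ i ∈ I, 0 < c i) (hc0 : ∀ i ∉ I, c i = 0) :
    ∑ i, c i • v i ∈ intrinsicInterior ℝ (coneOf v I) := by
  set ψ := Fintype.linearCombination ℝ (I.indicator v)
  have hψc : ψ c = ∑ i, c i • v i := Fintype.linearCombination_indicator_of_forall_notMem v hc0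
  have hspan : (affineSpan ℝ (coneOf v I) : Set E) ⊆ LinearMap.range ψ :=
    affineSpan_le (Q := (LinearMap.range ψ).toAffineSubspace).2 (coneOf_subset_range v I)
  set O : Set (Fin m → ℝ) := {c | ∀ i ∈ I, 0 < c i}
  have hO : IsOpen O := by
    have : O = ⋂ i ∈ I, {c | 0 < c i} := by ext; simp [O]
    exact this ▸ I.toFinite.isOpen_biInter fun i _ =>
      isOpen_lt continuous_const (continuous_apply i)
  have hOpen : IsOpen (ψ.rangeRestrict '' O) :=
    ψ.rangeRestrict.isOpenMap_of_finiteDimensional ψ.surjective_rangeRestrict O hO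
  obtain ⟨U, hU, hUO⟩ := (mem_nhds_subtype _ _ _).1 (hOpen.mem_nhds ⟨c, hc, rfl⟩)
  rw [mem_intrinsicInterior_iff_exists_nhds]
  refine ⟨subset_affineSpan ℝ _ ⟨c, fun i => ?_, hc0, rfl⟩, U, hψc ▸ hU, fun z ⟨hzU, hzA⟩ => ?_⟩
  · by_cases hi : i ∈ I
    · exact (hc i hi).le
    · exact (hc0 i hi).ge
  obtain ⟨c', hc', hz⟩ := hUO (a := ⟨z, hspan hzA⟩) hzU
  rw [← show ψ c' = z from congrArg Subtype.val hz, Fintype.linearCombination_indicator_apply]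
  exact sum_indicator_smul_mem_coneOf v fun i hi => (hc' i hi).le

theorem exists_pos_of_mem_intrinsicInterior_coneOf {I : Set (Fin m)} {x : E}
    (hx : x ∈ intrinsicInterior ℝ (coneOf v I)) :
    ∃ c : Fin m → ℝ, (∀ i ∈ I, 0 < c i) ∧ (∀ i ∉ I, c i = 0) ∧ x = ∑ i, c i • v i := by
  obtain ⟨hxA, U, hU, hUs⟩ := mem_intrinsicInterior_iff_exists_nhds.1 hx
  -- Moving `x` slightly away from `p` stays in the cone; adding back `t • p` then makes every
  -- coefficient on `I` positive.
  set p := ∑ i, I.indicator (1 : Fin m → ℝ) i • v i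
  have hp : p ∈ coneOf v I := sum_indicator_smul_mem_coneOf v fun _ _ => zero_le_one
  have hline : ∀ t : ℝ, x - t • p ∈ affineSpan ℝ (coneOf v I) := fun t => by
    simpa [sub_eq_neg_add] using (affineSpan ℝ (coneOf v I)).smul_vsub_vadd_mem (-t)
      (mem_affineSpan ℝ hp) (mem_affineSpan ℝ (zero_mem_coneOf v I)) hxA
  have hnear : ∀ᶠ t in 𝓝[>] (0 : ℝ), x - t • p ∈ U := by
    refine nhdsWithin_le_nhds (Tendsto.eventually ?_ hU)
    have hcont : Continuous fun t : ℝ => x - t • p := by fun_prop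
    simpa using hcont.tendsto 0
  obtain ⟨t, hxt, ht⟩ := (hnear.and self_mem_nhdsWithin).exists
  obtain ⟨d, hd0, hdI, hd⟩ := hUs ⟨hxt, hline t⟩
  refine ⟨d + t • I.indicator (1 : Fin m → ℝ), fun i hi => ?_, fun i hi => ?_, ?_⟩
  · simpa [hi] using add_pos_of_nonneg_of_pos (hd0 i) (mem_Ioi.1 ht)
  · simp [hi, hdI i hi]
  · simp only [Pi.add_apply, Pi.smul_apply, smul_eq_mul, add_smul, mul_smul,
      Finset.sum_add_distrib, ← Finset.smul_sum, ← hd, p, sub_add_cancel]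

theorem mem_intrinsicInterior_coneOf {I : Set (Fin m)} {x : E} :
    x ∈ intrinsicInterior ℝ (coneOf v I) ↔
      ∃ c : Fin m → ℝ, (∀ i ∈ I, 0 < c i) ∧ (∀ i ∉ I, c i = 0) ∧ x = ∑ i, c i • v i :=
  ⟨exists_pos_of_mem_intrinsicInterior_coneOf v, fun ⟨_, hc, hc0, hx⟩ =>
    hx ▸ sum_smul_mem_intrinsicInterior_coneOf v hc hc0⟩

theorem intrinsicInterior_coneOf_inter_nonempty_iff (I J : Set (Fin m)) :
    (intrinsicInterior ℝ (coneOf v I) ∩ intrinsicInterior ℝ (coneOf v J)).Nonempty ↔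
      ∃ u : Fin m → ℝ, ∑ i, u i • v i = 0 ∧ HasSignPattern u I J := by
  simp only [Set.Nonempty, mem_inter_iff, mem_intrinsicInterior_coneOf]
  constructor
  · rintro ⟨x, ⟨c, hc, hc0, hxc⟩, ⟨d, hd, hd0, hxd⟩⟩
    refine ⟨c - d, ?_, fun i hi => ?_, fun i hi => ?_, fun i hi => ?_⟩
    · simp [sub_smul, Finset.sum_sub_distrib, ← hxc, ← hxd]
    · simpa [hd0 i hi.2] using hc i hi.1
    · simpa [hc0 i hi.2] using hd i hi.1
    · simp [hc0 i fun h => hi (Or.inl h), hd0 i fun h => hi (Or.inr h)]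
  · rintro ⟨u, hu, hpat⟩
    set c : Fin m → ℝ := fun i => max (u i) 0 + (I ∩ J).indicator 1 i
    set d : Fin m → ℝ := fun i => max (-u i) 0 + (J ∩ I).indicator 1 i
    have hcd : ∑ i, c i • v i = ∑ i, d i • v i := by
      have hc : ∀ i, c i = u i + d i := fun i => by
        simp only [c, d, inter_comm J I]
        linarith [max_zero_sub_max_neg_zero_eq_self (u i)]
      simp [hc, add_smul, Finset.sum_add_distrib, hu]
    exact ⟨_, ⟨c, fun i => hpat.max_add_indicator_pos, fun i => hpat.max_add_indicator_eq_zero,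
      rfl⟩, ⟨d, fun i => hpat.neg.max_add_indicator_pos,
        fun i => hpat.neg.max_add_indicator_eq_zero, hcd⟩⟩

end ConeInterior

section Alternative

variable {F : Type*} [AddCommGroup F] [Module ℝ F]

theorem LinearMap.map_nonpos_of_forall_add_smul_mem (g : F →ₗ[ℝ] ℝ) {O : Set F} {s : ℝ}
    (hO : ∀ o ∈ O, g o < s) {o x : F} (h : ∀ t : ℝ, 0 ≤ t → o + t • x ∈ O) : g x ≤ 0 := by
  by_contra! hx
  have := hO _ (h ((|s - g o| + 1) / g x) (by positivity))
  rw [map_add, map_smul, smul_eq_mul, div_mul_cancel₀ _ hx.ne'] at this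
  linarith [le_abs_self (s - g o)]

theorem LinearMap.map_eq_zero_of_forall_le (g : F →ₗ[ℝ] ℝ) {M : Submodule ℝ F} {s : ℝ}
    (h : ∀ x ∈ M, s ≤ g x) {x : F} (hx : x ∈ M) : g x = 0 := by
  by_contra hne
  have := h (((s - 1) / g x) • x) (M.smul_mem _ hx)
  rw [map_smul, smul_eq_mul, div_mul_cancel₀ _ hne] at this
  linarith

variable {ι : Type*} {I J : Set ι}

def signCone (I J : Set ι) : Set (ι → ℝ) :=
  {x | (∀ i ∈ I \ J, x i < 0) ∧ ∀ i ∈ J \ I, 0 < x i}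

theorem signCone_eq (I J : Set ι) :
    signCone I J = (⋂ i ∈ I \ J, {x | x i < 0}) ∩ ⋂ i ∈ J \ I, {x | 0 < x i} := by
  ext
  simp [signCone]

theorem isOpen_signCone [Finite ι] (I J : Set ι) : IsOpen (signCone I J) :=
  signCone_eq I J ▸ ((I \ J).toFinite.isOpen_biInter fun i _ =>
    isOpen_lt (continuous_apply i) continuous_const).inter
      ((J \ I).toFinite.isOpen_biInter fun i _ => isOpen_lt continuous_const (continuous_apply i))

theorem convex_signCone (I J : Set ι) : Convex ℝ (signCone I J) :=
  signCone_eq I J ▸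
    (convex_iInter₂ fun i _ => convex_halfSpace_lt (LinearMap.proj i).isLinear 0).inter
      (convex_iInter₂ fun i _ => convex_halfSpace_gt (LinearMap.proj i).isLinear 0)

theorem LinearMap.map_nonpos_of_forall_lt_on_signCone (g : (ι → ℝ) →ₗ[ℝ] ℝ) {s : ℝ}
    (hg : ∀ x ∈ signCone I J, g x < s) {x : ι → ℝ} (hxI : ∀ i ∈ I \ J, x i ≤ 0)
    (hxJ : ∀ i ∈ J \ I, 0 ≤ x i) : g x ≤ 0 := by
  classical
  -- `signCone I J` is stable under adding nonnegative multiples of `x`.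
  refine g.map_nonpos_of_forall_add_smul_mem hg (o := J.indicator 1 - I.indicator 1)
    fun t ht => ⟨fun i hi => ?_, fun i hi => ?_⟩ <;>
  simp only [hi.1, hi.2, Pi.add_apply, Pi.sub_apply, Pi.smul_apply, smul_eq_mul,
    indicator_of_mem, indicator_of_notMem, not_false_eq_true, Pi.one_apply]
  · nlinarith [hxI i hi]
  · nlinarith [hxJ i hi]

theorem exists_signed_orthogonal_of_disjoint_signCone [Fintype ι] (M : Submodule ℝ (ι → ℝ))
    (hM : Disjoint (signCone I J) M) :
    ∃ c : ι → ℝ, (∀ x ∈ M, ∑ i, x i * c i = 0) ∧ (∀ i ∈ I \ J, 0 ≤ c i) ∧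
      (∀ i ∈ J \ I, c i ≤ 0) ∧ (∀ i ∉ I ∆ J, c i = 0) ∧ ∃ i ∈ I ∆ J, c i ≠ 0 := by
  classical
  obtain ⟨g, s, hgO, hgM⟩ :=
    geometric_hahn_banach_open (convex_signCone I J) (isOpen_signCone I J) M.convex hM
  set c : ι → ℝ := fun i => g fun j => if i = j then 1 else 0
  have hg : ∀ x, g x = ∑ i, x i * c i := (g : (ι → ℝ) →ₗ[ℝ] ℝ).pi_apply_eq_sum_univ
  have hcoord : ∀ i (r : ℝ), (i ∈ I \ J → r ≤ 0) → (i ∈ J \ I → 0 ≤ r) → r * c i ≤ 0 := by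
    intro i r hrI hrJ
    simpa [hg] using (g : (ι → ℝ) →ₗ[ℝ] ℝ).map_nonpos_of_forall_lt_on_signCone hgO
      (x := fun j => if i = j then r else 0)
      (fun j hj => by split_ifs with h; exacts [hrI (h ▸ hj), le_rfl])
      (fun j hj => by split_ifs with h; exacts [hrJ (h ▸ hj), le_rfl])
  have hc0 : ∀ i ∉ I ∆ J, c i = 0 := fun i hi => by
    rw [mem_symmDiff, not_or] at hi
    linarith [hcoord i 1 (fun h => absurd h hi.1) (fun h => absurd h hi.2),
      hcoord i (-1) (fun h => absurd h hi.1) fun h => absurd h hi.2]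
  refine ⟨c, fun x hx => (hg x).symm.trans
    ((g : (ι → ℝ) →ₗ[ℝ] ℝ).map_eq_zero_of_forall_le hgM hx), fun i hi => ?_, fun i hi => ?_,
    hc0, ?_⟩
  · simpa using hcoord i (-1) (fun _ => by norm_num) fun h => absurd hi.1 h.2
  · simpa using hcoord i 1 (fun h => absurd hi.1 h.2) fun _ => zero_le_one
  by_contra! hall
  have hc : ∀ i, c i = 0 := fun i => by
    by_cases hi : i ∈ I ∆ J
    exacts [hall i hi, hc0 i hi]
  obtain ⟨x, hx⟩ : (signCone I J).Nonempty :=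
    ⟨J.indicator 1 - I.indicator 1, by simp +contextual [signCone]⟩
  have hgx : g x = 0 := by simp [hg, hc]
  linarith [hgO x hx, hgM 0 M.zero_mem, g.map_zero]

theorem exists_dependence_of_forall_not_hasSignPattern [Fintype ι] {E : Type*} [AddCommGroup E]
    [Module ℝ E] (f : ι → E →ₗ[ℝ] ℝ) (h : ∀ w, ¬HasSignPattern (fun i => f i w) Iᶜ Jᶜ) :
    ∃ y : ι → ℝ, (∀ w, ∑ i, y i * f i w = 0) ∧ (∀ i ∈ I \ J, 0 ≤ y i) ∧
      (∀ i ∈ J \ I, y i ≤ 0) ∧ (∀ i ∉ I ∪ J, y i = 0) ∧ ∃ i ∈ I ∆ J, y i ≠ 0 := by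
  classical
  set E₀ : Submodule ℝ E := ⨅ i, LinearMap.ker ((I ∩ J).indicator f i)
  have hE₀ : ∀ w ∈ E₀, ∀ i ∈ I ∩ J, f i w = 0 := fun w hw i hi => by
    simpa [hi] using (Submodule.mem_iInf _).1 hw i
  obtain ⟨c, hcM, hcI, hcJ, hc0, hne⟩ := exists_signed_orthogonal_of_disjoint_signCone
    (E₀.map (LinearMap.pi f)) <| disjoint_left.2 <| by
      rintro _ ⟨hI, hJ⟩ ⟨w, hw, rfl⟩
      exact h w (hasSignPattern_compl_iff.2 ⟨hJ, hI, hE₀ w hw⟩)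
  -- `K` vanishes on `E₀`, hence is a combination `z` of the `f i` with `i ∈ I ∩ J`, and `c - z`
  -- is the dependence sought.
  set K : E →ₗ[ℝ] ℝ := ∑ i, c i • f i
  have hK : E₀ ≤ LinearMap.ker K := fun w hw => by
    simpa [K, mul_comm] using hcM _ ⟨w, hw, rfl⟩
  obtain ⟨z, hz⟩ :=
    (Submodule.mem_span_range_iff_exists_fun ℝ).1 (mem_span_of_iInf_ker_le_ker hK)
  have hzero : ∀ i ∉ I ∩ J, (I ∩ J).indicator z i = 0 := fun i hi => indicator_of_notMem hi z
  refine ⟨c - (I ∩ J).indicator z, fun w => ?_, fun i hi => ?_, fun i hi => ?_, fun i hi => ?_, ?_⟩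
  · have hzw : ∀ i, (I ∩ J).indicator z i * f i w = z i * (I ∩ J).indicator f i w := fun i => by
      by_cases hi : i ∈ I ∩ J <;> simp [hi]
    have hzK : ∑ i, z i * (I ∩ J).indicator f i w = ∑ i, c i * f i w := by
      simpa [K, LinearMap.sum_apply] using congrArg (· w) hz
    simp [sub_mul, Finset.sum_sub_distrib, hzw, hzK]
  · simpa [hzero i fun h => hi.2 h.2] using hcI i hi
  · simpa [hzero i fun h => hi.2 h.1] using hcJ i hi
  · simp [hzero i fun h => hi (Or.inl h.1), hc0 i fun h => hi ((mem_symmDiff.1 h).elim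
      (fun h => Or.inl h.1) fun h => Or.inr h.1)]
  · obtain ⟨i, hi, hci⟩ := hne
    refine ⟨i, hi, ?_⟩
    simpa [hzero i fun h => (mem_symmDiff.1 hi).elim (fun h' => h'.2 h.2) fun h' => h'.2 h.1]
      using hci

end Alternative

theorem stmt3_general {V : Type*} [NormedAddCommGroup V] [NormedSpace ℝ V]
    {m : ℕ} (γ : Fin m → (V →L[ℝ] ℝ))
    (W : Submodule ℝ (Fin m → ℝ))
    (hW : ∀ y : Fin m → ℝ, y ∈ W ↔ ∑ i, y i • γ i = 0)
    (a : Fin m → (W →L[ℝ] ℝ))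
    (ha : ∀ (i : Fin m) (w : W), a i w = (w : Fin m → ℝ) i)
    (K : Set (Set (Fin m)))
    (hKdown : ∀ I ∈ K, ∀ J ⊆ I, J ∈ K) :
    (∀ I ∈ K, ∀ J ∈ K, I ≠ J →
        intrinsicInterior ℝ (coneOf a I) ∩ intrinsicInterior ℝ (coneOf a J) = ∅) ↔
      ∀ I ∈ K, ∀ J ∈ K,
        (intrinsicInterior ℝ (coneOf γ Iᶜ) ∩
          intrinsicInterior ℝ (coneOf γ Jᶜ)).Nonempty := by
  have hrel : ∀ y : Fin m → ℝ,
      ∑ i, y i • a i = 0 ↔ ∀ w : W, ∑ i, y i * (w : Fin m → ℝ) i = 0 := fun y => by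
    simp [ContinuousLinearMap.ext_iff, ha]
  constructor
  · intro hb I hI J hJ
    rw [intrinsicInterior_coneOf_inter_nonempty_iff]
    by_contra hno
    obtain ⟨y, hy, hpos, hneg, hzero, hne⟩ :=
      exists_dependence_of_forall_not_hasSignPattern (I := I) (J := J)
        (fun i => (a i : W →ₗ[ℝ] ℝ)) fun w hw => hno ⟨w, (hW w).1 w.2, by simpa [ha] using hw⟩
    obtain ⟨I', hI', J', hJ', hIJ', hpat⟩ :=
      exists_hasSignPattern_of_nonneg_of_nonpos hpos hneg hzero hne
    exact ((intrinsicInterior_coneOf_inter_nonempty_iff a I' J').2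
      ⟨y, (hrel y).2 fun w => by simpa [ha] using hy w, hpat⟩).ne_empty
        (hb I' (hKdown I hI I' hI') J' (hKdown J hJ J' hJ') hIJ')
  · intro hc I hI J hJ hIJ
    rw [← not_nonempty_iff_eq_empty]
    intro hne
    obtain ⟨y, hy, hpat⟩ := (intrinsicInterior_coneOf_inter_nonempty_iff a I J).1 hne
    obtain ⟨w, hw, hwpat⟩ := (intrinsicInterior_coneOf_inter_nonempty_iff γ Iᶜ Jᶜ).1 (hc I hI J hJ)
    exact (hpat.sum_mul_neg hwpat hIJ).ne ((hrel y).1 hy ⟨w, (hW w).2 hw⟩)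

/-- For a simplicial complex `K` on `{1,…,m}`, the relative
interiors of the cones `cone{a i : i ∈ I}`, `I ∈ K`, are pairwise disjoint iff
the relative interiors of the Gale dual cones `cone{γ i : i ∉ I}`, `I ∈ K`,
pairwise intersect. -/
theorem stmt3 {V : Type*} [NormedAddCommGroup V] [NormedSpace ℝ V]
    [FiniteDimensional ℝ V] {m : ℕ} (γ : Fin m → (V →L[ℝ] ℝ))
    (hspan : Submodule.span ℝ (Set.range γ) = ⊤)
    (W : Submodule ℝ (Fin m → ℝ))
    (hW : ∀ y : Fin m → ℝ, y ∈ W ↔ ∑ i, y i • γ i = 0)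
    (a : Fin m → (W →L[ℝ] ℝ))
    (ha : ∀ (i : Fin m) (w : W), a i w = (w : Fin m → ℝ) i)
    (K : Set (Set (Fin m))) (hKempty : ∅ ∈ K)
    (hKdown : ∀ I ∈ K, ∀ J ⊆ I, J ∈ K) :
    (∀ I ∈ K, ∀ J ∈ K, I ≠ J →
        intrinsicInterior ℝ (coneOf a I) ∩ intrinsicInterior ℝ (coneOf a J) = ∅) ↔
      ∀ I ∈ K, ∀ J ∈ K,
        (intrinsicInterior ℝ (coneOf γ Iᶜ) ∩
          intrinsicInterior ℝ (coneOf γ Jᶜ)).Nonempty :=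
  stmt3_general γ W hW a ha K hKdown
end

section
/- For subsets I, J ⊆ {1,…,m}, the intersection relint(cone{γ_i : i ∉ I}) ∩ relint(cone{γ_j : j ∉ J}) is nonempty if and only if there exists w ∈ W such that a_i(w) = 0 for all i ∈ I ∩ J, a_i(w) > 0 for all i ∈ J \ I, and a_i(w) < 0 for all i ∈ I \ J. Moreover, for any such w one has cone{a_i : i ∈ I} ∩ cone{a_j : j ∈ J} = cone{a_i : i ∈ I ∩ J} = {ξ ∈ cone{a_i : i ∈ I} : ξ(w) = 0}. -/
/-!
A point lies in the relative interior of `coneOf v S` iff it is a combination of the `v i`,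
`i ∈ S`, with strictly positive coefficients: the coefficient map onto the span of the cone is
open, and conversely a relative interior point can be pushed slightly backwards along
`∑ i ∈ S, v i` without leaving the cone. Two such representations of a common point of the
relative interiors for `Iᶜ` and `Jᶜ` differ by a linear relation `w ∈ W` among the `γ i` with
exactly the sign pattern of the statement, and every such `w` splits into two such
representations.

For such `w`, the functional `ξ ↦ ξ w` is `≤ 0` on `coneOf a I` and `≥ 0` on `coneOf a J`, so it
vanishes on their intersection; on `coneOf a I` its zero set is the face spanned by the `a i`
with `a i w = 0`, i.e. with `i ∈ I ∩ J`.
-/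

open Set Filter Topology

theorem mem_intrinsicInterior_iff_eventually {𝕜 V P : Type*} [Ring 𝕜] [AddCommGroup V]
    [Module 𝕜 V] [TopologicalSpace P] [AddTorsor V P] {s : Set P} {x : P}
    (hx : x ∈ affineSpan 𝕜 s) :
    x ∈ intrinsicInterior 𝕜 s ↔ ∀ᶠ y in 𝓝[affineSpan 𝕜 s] x, y ∈ s := by
  rw [mem_intrinsicInterior, ← eventually_nhds_subtype_iff _ ⟨x, hx⟩]
  constructor
  · rintro ⟨y, hy, rfl⟩
    exact mem_interior_iff_mem_nhds.1 hy
  · exact fun h => ⟨_, mem_interior_iff_mem_nhds.2 h, rfl⟩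

section

variable {E : Type*} [AddCommGroup E] [Module ℝ E] {m : ℕ} (v : Fin m → E) (S : Set (Fin m))

theorem zero_mem_coneOf_s4 : (0 : E) ∈ coneOf v S :=
  ⟨0, fun _ => le_rfl, fun _ _ => rfl, by simp⟩

theorem coneOf_mono {S T : Set (Fin m)} (h : S ⊆ T) : coneOf v S ⊆ coneOf v T := by
  rintro x ⟨c, hc, hcS, rfl⟩
  exact ⟨c, hc, fun i hi => hcS i fun hiS => hi (h hiS), rfl⟩

section Face

variable {f : E →ₗ[ℝ] ℝ}

theorem map_sum_smul (c : Fin m → ℝ) : f (∑ i, c i • v i) = ∑ i, c i * f (v i) := by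
  simp only [map_sum, map_smul, smul_eq_mul]

theorem mul_map_nonpos (hf : ∀ i ∈ S, f (v i) ≤ 0) {c : Fin m → ℝ} (hc : ∀ i, 0 ≤ c i)
    (hcS : ∀ i ∉ S, c i = 0) (i : Fin m) : c i * f (v i) ≤ 0 := by
  by_cases hi : i ∈ S
  · exact mul_nonpos_of_nonneg_of_nonpos (hc i) (hf i hi)
  · simp [hcS i hi]

theorem map_nonpos_of_mem_coneOf (hf : ∀ i ∈ S, f (v i) ≤ 0) {x : E}
    (hx : x ∈ coneOf v S) : f x ≤ 0 := by
  obtain ⟨c, hc, hcS, rfl⟩ := hx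
  rw [map_sum_smul]
  exact Finset.sum_nonpos fun i _ => mul_map_nonpos v S hf hc hcS i

theorem coneOf_sep_map_eq_zero (hf : ∀ i ∈ S, f (v i) ≤ 0) :
    coneOf v {i ∈ S | f (v i) = 0} = {x ∈ coneOf v S | f x = 0} := by
  ext x
  constructor
  · rintro ⟨c, hc, hcS, rfl⟩
    refine ⟨⟨c, hc, fun i hi => hcS i fun h => hi h.1, rfl⟩, ?_⟩
    rw [map_sum_smul]
    refine Finset.sum_eq_zero fun i _ => ?_
    by_cases hi : i ∈ S ∧ f (v i) = 0
    · simp [hi.2]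
    · simp [hcS i hi]
  · rintro ⟨⟨c, hc, hcS, rfl⟩, hfx⟩
    rw [map_sum_smul, Finset.sum_eq_zero_iff_of_nonpos
      fun i _ => mul_map_nonpos v S hf hc hcS i] at hfx
    refine ⟨c, hc, fun i hi => ?_, rfl⟩
    by_cases hiS : i ∈ S
    · exact (mul_eq_zero.1 (hfx i (Finset.mem_univ i))).resolve_right fun h => hi ⟨hiS, h⟩
    · exact hcS i hiS

theorem coneOf_inter_coneOf_of_separating {I J : Set (Fin m)}
    (h0 : ∀ i ∈ I ∩ J, f (v i) = 0) (hpos : ∀ i ∈ J \ I, 0 < f (v i))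
    (hneg : ∀ i ∈ I \ J, f (v i) < 0) :
    coneOf v I ∩ coneOf v J = coneOf v (I ∩ J) ∧
      coneOf v (I ∩ J) = {x ∈ coneOf v I | f x = 0} := by
  have hfI : ∀ i ∈ I, f (v i) ≤ 0 := fun i hiI =>
    (em (i ∈ J)).elim (fun hiJ => (h0 i ⟨hiI, hiJ⟩).le) fun hiJ => (hneg i ⟨hiI, hiJ⟩).le
  have hfJ : ∀ i ∈ J, (-f) (v i) ≤ 0 := fun i hiJ => neg_nonpos.2 <|
    (em (i ∈ I)).elim (fun hiI => (h0 i ⟨hiI, hiJ⟩).ge) fun hiI => (hpos i ⟨hiJ, hiI⟩).le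
  have hI : {i ∈ I | f (v i) = 0} = I ∩ J := by
    ext i
    exact ⟨fun ⟨hiI, hi0⟩ => ⟨hiI, by_contra fun hiJ => (hneg i ⟨hiI, hiJ⟩).ne hi0⟩,
      fun hi => ⟨hi.1, h0 i hi⟩⟩
  have hface : coneOf v (I ∩ J) = {x ∈ coneOf v I | f x = 0} := by
    rw [← hI, coneOf_sep_map_eq_zero v I hfI]
  refine ⟨(subset_inter (coneOf_mono v inter_subset_left)
    (coneOf_mono v inter_subset_right)).antisymm' ?_, hface⟩
  rintro x ⟨hxI, hxJ⟩
  rw [hface]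
  exact ⟨hxI, le_antisymm (map_nonpos_of_mem_coneOf v I hfI hxI)
    (neg_nonpos.1 (map_nonpos_of_mem_coneOf v J hfJ hxJ))⟩

end Face

theorem linearCombination_indicator_apply (c : Fin m → ℝ) :
    Fintype.linearCombination ℝ (S.indicator v) c = ∑ i, S.indicator c i • v i := by
  simp only [Fintype.linearCombination_apply, ← indicator_smul_apply, indicator_smul_apply_left]

theorem image_linearCombination_indicator (p : ℝ → Prop) :
    Fintype.linearCombination ℝ (S.indicator v) '' {c | ∀ i ∈ S, p (c i)} =
      {x | ∃ c : Fin m → ℝ, (∀ i ∈ S, p (c i)) ∧ (∀ i ∉ S, c i = 0) ∧ x = ∑ i, c i • v i} := by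
  ext x
  simp only [mem_image, mem_ofPred_eq, linearCombination_indicator_apply]
  constructor
  · rintro ⟨c, hc, rfl⟩
    exact ⟨S.indicator c, fun i hi => by simpa [hi] using hc i hi,
      fun i hi => indicator_of_notMem hi c, rfl⟩
  · rintro ⟨c, hc, hcS, rfl⟩
    exact ⟨c, hc, by rw [indicator_eq_self.2 (Function.support_subset_iff'.2 hcS)]⟩

theorem coneOf_eq_image :
    coneOf v S = Fintype.linearCombination ℝ (S.indicator v) '' {c | ∀ i, 0 ≤ c i} := by
  ext x
  simp only [coneOf, mem_image, mem_ofPred_eq, linearCombination_indicator_apply]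
  constructor
  · rintro ⟨c, hc, hcS, rfl⟩
    exact ⟨c, hc, by rw [indicator_eq_self.2 (Function.support_subset_iff'.2 hcS)]⟩
  · rintro ⟨c, hc, rfl⟩
    exact ⟨S.indicator c, indicator_nonneg fun i _ => hc i,
      fun i hi => indicator_of_notMem hi c, rfl⟩

theorem coe_affineSpan_coneOf :
    (affineSpan ℝ (coneOf v S) : Set E) =
      LinearMap.range (Fintype.linearCombination ℝ (S.indicator v)) := by
  rw [← insert_eq_of_mem (zero_mem_coneOf_s4 v S), affineSpan_insert_zero, coneOf_eq_image]
  refine congrArg _ (le_antisymm (Submodule.span_le.2 (image_subset_range _ _)) ?_)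
  rw [Fintype.range_linearCombination, Submodule.span_le]
  rintro _ ⟨i, rfl⟩
  exact Submodule.subset_span
    ⟨Pi.single i 1, fun j => by simp [Pi.single_apply, apply_ite], by simp⟩

variable [TopologicalSpace E] [IsTopologicalAddGroup E] [ContinuousSMul ℝ E] [T2Space E]

theorem intrinsicInterior_coneOf : intrinsicInterior ℝ (coneOf v S) =
    {x | ∃ c : Fin m → ℝ, (∀ i ∈ S, 0 < c i) ∧ (∀ i ∉ S, c i = 0) ∧ x = ∑ i, c i • v i} := by
  set Φ := Fintype.linearCombination ℝ (S.indicator v)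
  have hspan := coe_affineSpan_coneOf v S
  rw [← image_linearCombination_indicator v S (0 < ·)]
  ext x
  constructor
  · intro hx
    have hxA : x ∈ affineSpan ℝ (coneOf v S) := subset_affineSpan _ _ (intrinsicInterior_subset hx)
    have hev := (mem_intrinsicInterior_iff_eventually hxA).1 hx
    rw [hspan] at hev
    have hxR : x ∈ LinearMap.range Φ := by rw [← SetLike.mem_coe, ← hspan]; exact hxA
    have hlim : Tendsto (fun t : ℝ => x - t • Φ 1) (𝓝 0) (𝓝[LinearMap.range Φ] x) := by
      refine tendsto_nhdsWithin_iff.2 ⟨?_, Eventually.of_forall fun t =>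
        sub_mem hxR (Submodule.smul_mem _ _ (LinearMap.mem_range_self _ _))⟩
      simpa using (show Continuous fun t : ℝ => x - t • Φ 1 by fun_prop).tendsto 0
    obtain ⟨t, ht, hxt⟩ := (hlim.eventually hev).exists_gt
    rw [coneOf_eq_image] at hxt
    obtain ⟨c, hc, hct⟩ := hxt
    refine ⟨c + t • 1, fun i _ => ?_, ?_⟩
    · simpa using add_pos_of_nonneg_of_pos (hc i) ht
    · rw [map_add, map_smul, hct, sub_add_cancel]
  · rintro ⟨c, hc, rfl⟩
    have hA : Φ c ∈ affineSpan ℝ (coneOf v S) := by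
      rw [← SetLike.mem_coe, hspan]; exact LinearMap.mem_range_self _ _
    rw [mem_intrinsicInterior_iff_eventually hA, hspan]
    have hopen : IsOpen (Φ.rangeRestrict '' {c | ∀ i ∈ S, 0 < c i}) :=
      LinearMap.isOpenMap_of_finiteDimensional _ Φ.surjective_rangeRestrict _
        (isOpen_set_pi S.toFinite fun _ _ => isOpen_Ioi)
    refine (eventually_nhds_subtype_iff (LinearMap.range Φ : Set E) (Φ.rangeRestrict c)
      (· ∈ coneOf v S)).1 ?_
    filter_upwards [hopen.mem_nhds (mem_image_of_mem _ hc)]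
    rintro _ ⟨c', hc', rfl⟩
    exact ⟨S.indicator c', indicator_nonneg fun i hi => (hc' i hi).le,
      fun i hi => indicator_of_notMem hi c', linearCombination_indicator_apply v S c'⟩

theorem intrinsicInterior_coneOf_compl_inter_nonempty_iff (I J : Set (Fin m)) :
    (intrinsicInterior ℝ (coneOf v Iᶜ) ∩ intrinsicInterior ℝ (coneOf v Jᶜ)).Nonempty ↔
      ∃ w : Fin m → ℝ, ∑ i, w i • v i = 0 ∧ (∀ i ∈ I ∩ J, w i = 0) ∧
        (∀ i ∈ J \ I, 0 < w i) ∧ ∀ i ∈ I \ J, w i < 0 := by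
  simp only [intrinsicInterior_coneOf]
  constructor
  · rintro ⟨x, ⟨c, hc, hcI, rfl⟩, d, hd, hdJ, hx⟩
    refine ⟨c - d, by simp [sub_smul, Finset.sum_sub_distrib, hx], ?_, ?_, ?_⟩
    · rintro i ⟨hiI, hiJ⟩
      simp [hcI i (not_not_intro hiI), hdJ i (not_not_intro hiJ)]
    · rintro i ⟨hiJ, hiI⟩
      simpa [hdJ i (not_not_intro hiJ)] using hc i hiI
    · rintro i ⟨hiI, hiJ⟩
      simpa [hcI i (not_not_intro hiI)] using hd i hiJ
  · rintro ⟨w, hw, h0, hpos, hneg⟩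
    classical
    -- the two representations of the common point are `c` and `c - w`
    set c : Fin m → ℝ := fun i => if i ∈ I then 0 else if i ∈ J then w i else |w i| + 1
    refine ⟨∑ i, c i • v i, ⟨c, fun i hi => ?_, fun i hi => ?_, rfl⟩,
      c - w, fun i hi => ?_, fun i hi => ?_, by simp [sub_smul, Finset.sum_sub_distrib, hw]⟩
    all_goals
      simp only [mem_compl_iff, not_not] at hi
      simp only [c, Pi.sub_apply]
      split_ifs <;> grind

end

theorem stmt4_general {V : Type*} [NormedAddCommGroup V] [NormedSpace ℝ V]
    {m : ℕ} (γ : Fin m → (V →L[ℝ] ℝ))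
    (W : Submodule ℝ (Fin m → ℝ))
    (hW : ∀ y : Fin m → ℝ, y ∈ W ↔ ∑ i, y i • γ i = 0)
    (a : Fin m → (W →L[ℝ] ℝ))
    (ha : ∀ (i : Fin m) (w : W), a i w = (w : Fin m → ℝ) i)
    (I J : Set (Fin m)) :
    ((intrinsicInterior ℝ (coneOf γ Iᶜ) ∩
        intrinsicInterior ℝ (coneOf γ Jᶜ)).Nonempty ↔
      ∃ w : W, (∀ i ∈ I ∩ J, a i w = 0) ∧ (∀ i ∈ J \ I, 0 < a i w) ∧
        ∀ i ∈ I \ J, a i w < 0) ∧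
    (∀ w : W, (∀ i ∈ I ∩ J, a i w = 0) → (∀ i ∈ J \ I, 0 < a i w) →
      (∀ i ∈ I \ J, a i w < 0) →
      coneOf a I ∩ coneOf a J = coneOf a (I ∩ J) ∧
        coneOf a (I ∩ J) = {ξ ∈ coneOf a I | ξ w = 0}) := by
  refine ⟨?_, fun w => coneOf_inter_coneOf_of_separating (f := ContinuousLinearMap.apply ℝ ℝ w) a⟩
  rw [intrinsicInterior_coneOf_compl_inter_nonempty_iff]
  simp only [ha]
  constructor
  · rintro ⟨w, hw, hsigns⟩
    exact ⟨⟨w, (hW w).2 hw⟩, hsigns⟩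
  · rintro ⟨w, hsigns⟩
    exact ⟨w, (hW w).1 w.2, hsigns⟩

/-- The relative interiors of the Gale dual cones
`cone{γ i : i ∉ I}` and `cone{γ j : j ∉ J}` intersect iff there is `w ∈ W`
with `a i w = 0` on `I ∩ J`, `a i w > 0` on `J \ I`, `a i w < 0` on `I \ J`;
moreover for any such `w` the cones `cone{a i : i ∈ I}` and `cone{a j : j ∈ J}`
intersect in the common face `cone{a i : i ∈ I ∩ J}`, cut out on
`cone{a i : i ∈ I}` by the hyperplane `ξ(w) = 0`. -/
theorem stmt4 {V : Type*} [NormedAddCommGroup V] [NormedSpace ℝ V]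
    [FiniteDimensional ℝ V] {m : ℕ} (γ : Fin m → (V →L[ℝ] ℝ))
    (hspan : Submodule.span ℝ (Set.range γ) = ⊤)
    (W : Submodule ℝ (Fin m → ℝ))
    (hW : ∀ y : Fin m → ℝ, y ∈ W ↔ ∑ i, y i • γ i = 0)
    (a : Fin m → (W →L[ℝ] ℝ))
    (ha : ∀ (i : Fin m) (w : W), a i w = (w : Fin m → ℝ) i)
    (I J : Set (Fin m)) :
    ((intrinsicInterior ℝ (coneOf γ Iᶜ) ∩
        intrinsicInterior ℝ (coneOf γ Jᶜ)).Nonempty ↔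
      ∃ w : W, (∀ i ∈ I ∩ J, a i w = 0) ∧ (∀ i ∈ J \ I, 0 < a i w) ∧
        ∀ i ∈ I \ J, a i w < 0) ∧
    (∀ w : W, (∀ i ∈ I ∩ J, a i w = 0) → (∀ i ∈ J \ I, 0 < a i w) →
      (∀ i ∈ I \ J, a i w < 0) →
      coneOf a I ∩ coneOf a J = coneOf a (I ∩ J) ∧
        coneOf a (I ∩ J) = {ξ ∈ coneOf a I | ξ w = 0}) :=
  stmt4_general γ W hW a ha I J
end

section
/- Let K be a simplicial complex on {1,…,m}. The restriction of the exponential action of V to U(K) is free, i.e., v • x = x for some x ∈ U(K) implies v = 0, if and only if for every I ∈ K the family (a_i)_{i ∈ I} is linearly independent in W*. -/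
/-!
A point `x` is fixed by `v` iff `γ i v = 0` wherever `x i ≠ 0`, and since the `γ i` span the
dual they detect `v = 0`. By Gale duality the vectors `(γ i v)_i` are exactly the coefficient
vectors of linear relations among the `a i`. Hence `(a i)_{i ∈ I}` is independent iff every `v`
with `γ i v = 0` off `I` vanishes, which is freeness at any `x` whose zero set is `I`.
-/

open Module

theorem Module.Dual.exists_forall_apply_eq_iff {K V ι : Type*} [Field K] [AddCommGroup V]
    [Module K V] [IsReflexive K V] [Fintype ι] (γ : ι → Dual K V) (c : ι → K) :
    (∃ v, ∀ i, γ i v = c i) ↔ ∀ y : ι → K, ∑ i, y i • γ i = 0 → ∑ i, y i * c i = 0 := by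
  classical
  constructor
  · rintro ⟨v, hv⟩ y hy
    simpa [← hv] using LinearMap.congr_fun hy v
  · intro hc
    -- `y ↦ ∑ y i * c i` kills the kernel of `y ↦ ∑ y i • γ i`, hence factors through it
    have hmem : Fintype.linearCombination K c ∈
        (LinearMap.ker (Fintype.linearCombination K γ)).dualAnnihilator := by
      rw [Submodule.mem_dualAnnihilator]
      intro y hy
      simpa [Fintype.linearCombination_apply] using hc y hy
    rw [← LinearMap.range_dualMap_eq_dualAnnihilator_ker] at hmem
    obtain ⟨ψ, hψ⟩ := hmem
    refine ⟨(evalEquiv K V).symm ψ, fun i => ?_⟩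
    simpa [apply_evalEquiv_symm_apply, Fintype.linearCombination_apply_single]
      using LinearMap.congr_fun hψ (Pi.single i 1)

section GaleDual

variable {K V ι : Type*} [Field K] [TopologicalSpace K] [IsTopologicalRing K]
  [AddCommGroup V] [TopologicalSpace V] [Module K V] [IsReflexive K V] [Fintype ι]
  {γ : ι → V →L[K] K} {W : Submodule K (ι → K)} {a : ι → (W →L[K] K)}

theorem linearCombination_galeDual_eq_zero_iff
    (hW : ∀ y : ι → K, y ∈ W ↔ ∑ i, y i • γ i = 0) (ha : ∀ i (w : W), a i w = (w : ι → K) i)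
    (l : ι →₀ K) :
    Finsupp.linearCombination K a l = 0 ↔ ∃ v, ∀ i, γ i v = l i := by
  have hW' (y : ι → K) : y ∈ W ↔ ∑ i, y i • (γ i : V →ₗ[K] K) = 0 := by
    rw [hW, ← ContinuousLinearMap.coe_inj]; simp
  refine Iff.trans ?_ (Module.Dual.exists_forall_apply_eq_iff (fun i => (γ i : V →ₗ[K] K)) l).symm
  rw [Finsupp.linearCombination_apply, Finsupp.sum_fintype _ _ fun i => zero_smul K (a i)]
  simp only [ContinuousLinearMap.ext_iff, sum_apply, smul_apply, ha, smul_eq_mul, mul_comm (l _),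
    zero_apply, Subtype.forall, ← hW']

theorem linearIndepOn_galeDual_iff
    (hW : ∀ y : ι → K, y ∈ W ↔ ∑ i, y i • γ i = 0) (ha : ∀ i (w : W), a i w = (w : ι → K) i)
    (I : Set ι) :
    LinearIndepOn K a I ↔ ∀ v, (∀ i ∉ I, γ i v = 0) → ∀ i, γ i v = 0 := by
  rw [linearIndepOn_iff (R := K) (v := a)]
  simp only [Finsupp.mem_supported', linearCombination_galeDual_eq_zero_iff hW ha]
  constructor
  · intro h v hv i
    simpa using
      DFunLike.congr_fun (h (Finsupp.equivFunOnFinite.symm fun i => γ i v) hv ⟨v, fun _ => rfl⟩) i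
  · rintro h l hl ⟨v, hv⟩
    ext i
    simpa [hv] using h v (fun i hi => (hv i).trans (hl i hi)) i

end GaleDual

theorem eq_zero_of_forall_apply_eq_zero_of_span_eq_top {R V ι : Type*} [CommRing R]
    [TopologicalSpace R] [IsTopologicalRing R] [AddCommGroup V] [TopologicalSpace V] [Module R V]
    [SeparatingDual R V]
    {γ : ι → V →L[R] R} (hspan : Submodule.span R (Set.range γ) = ⊤) {v : V}
    (hv : ∀ i, γ i v = 0) : v = 0 := by
  refine SeparatingDual.eq_zero_of_forall_dual_eq_zero (R := R) fun f => ?_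
  have hker : Submodule.span R (Set.range γ) ≤
      LinearMap.ker ((LinearMap.applyₗ v).comp (ContinuousLinearMap.coeLM R)) :=
    Submodule.span_le.2 (Set.range_subset_iff.2 hv)
  exact hker (hspan ▸ Submodule.mem_top)

theorem Real.exp_mul_eq_self_iff {ι : Type*} (f x : ι → ℝ) :
    (fun i => Real.exp (f i) * x i) = x ↔ ∀ i, x i ≠ 0 → f i = 0 := by
  rw [funext_iff]
  refine forall_congr' fun i => ?_
  by_cases hx : x i = 0 <;> simp [hx, mul_eq_right₀, Real.exp_eq_one_iff]

theorem stmt5_general {V : Type*} [NormedAddCommGroup V] [NormedSpace ℝ V]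
    [FiniteDimensional ℝ V] {m : ℕ} (γ : Fin m → (V →L[ℝ] ℝ))
    (hspan : Submodule.span ℝ (Set.range γ) = ⊤)
    (W : Submodule ℝ (Fin m → ℝ))
    (hW : ∀ y : Fin m → ℝ, y ∈ W ↔ ∑ i, y i • γ i = 0)
    (a : Fin m → (W →L[ℝ] ℝ))
    (ha : ∀ (i : Fin m) (w : W), a i w = (w : Fin m → ℝ) i)
    (K : Set (Set (Fin m))) :
    (∀ (v : V) (x : Fin m → ℝ), {i | x i = 0} ∈ K →
        (fun i => Real.exp (γ i v) * x i) = x → v = 0) ↔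
      ∀ I ∈ K, LinearIndependent ℝ (fun i : I => a i.1) := by
  have hindep (I : Set (Fin m)) :
      LinearIndependent ℝ (fun i : I => a i.1) ↔ ∀ v, (∀ i ∉ I, γ i v = 0) → v = 0 :=
    (linearIndepOn_galeDual_iff hW ha I).trans <| forall_congr' fun v => imp_congr_right fun _ =>
      ⟨eq_zero_of_forall_apply_eq_zero_of_span_eq_top hspan, fun hv i => by simp [hv]⟩
  simp only [Real.exp_mul_eq_self_iff, hindep]
  constructor
  · intro hfree I hI v hv
    have hzero : {i | Iᶜ.indicator 1 i = (0 : ℝ)} = I := by ext i; simp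
    exact hfree v (Iᶜ.indicator 1) (by rwa [hzero]) fun i hi => hv i (by simpa using hi)
  · exact fun h v x hx hfix => h _ hx v hfix

/-- The exponential action of `V` restricted to `U(K)` is free
iff for every `I ∈ K` the family `(a i)_{i ∈ I}` is linearly independent in `W*`. -/
theorem stmt5 {V : Type*} [NormedAddCommGroup V] [NormedSpace ℝ V]
    [FiniteDimensional ℝ V] {m : ℕ} (γ : Fin m → (V →L[ℝ] ℝ))
    (hspan : Submodule.span ℝ (Set.range γ) = ⊤)
    (W : Submodule ℝ (Fin m → ℝ))
    (hW : ∀ y : Fin m → ℝ, y ∈ W ↔ ∑ i, y i • γ i = 0)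
    (a : Fin m → (W →L[ℝ] ℝ))
    (ha : ∀ (i : Fin m) (w : W), a i w = (w : Fin m → ℝ) i)
    (K : Set (Set (Fin m))) (hKempty : ∅ ∈ K)
    (hKdown : ∀ I ∈ K, ∀ J ⊆ I, J ∈ K) :
    (∀ (v : V) (x : Fin m → ℝ), {i | x i = 0} ∈ K →
        (fun i => Real.exp (γ i v) * x i) = x → v = 0) ↔
      ∀ I ∈ K, LinearIndependent ℝ (fun i : I => a i.1) :=
  stmt5_general γ hspan W hW a ha K
end

section
/- Let K be a simplicial complex on {1,…,m}. Assume the fan condition (for any two distinct I, J ∈ K, relint(cone{a_i : i ∈ I}) ∩ relint(cone{a_j : j ∈ J}) = ∅) and completeness (⋃_{I ∈ K} cone{a_i : i ∈ I} = W*). Define R_K = {x ∈ ℝ^m : there exists I ∈ K with |x_i| = 1 for all i ∉ I and |x_i| ≤ 1 for all i ∈ I}. Then R_K ⊆ U(K), every V-orbit of the exponential action on U(K) meets R_K in exactly one point, and the composite of the inclusion R_K ↪ U(K) with the quotient projection is a homeomorphism from R_K (with its subspace topology) onto the orbit space U(K)/V (with the quotient topology). -/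
/-- `U(K) = {x ∈ ℝ^m : {i : x i = 0} ∈ K}`, with the subspace topology. -/
abbrev UK {m : ℕ} (K : Set (Set (Fin m))) : Type _ :=
  {x : Fin m → ℝ // {i | x i = 0} ∈ K}

/-- Two points of `U(K)` are related iff they lie in the same orbit of the
exponential action `v • x = (e^{γ₁(v)} x₁, …, e^{γ_m(v)} x_m)` of `V`. -/
def orbitRel {V : Type*} [NormedAddCommGroup V] [NormedSpace ℝ V] {m : ℕ}
    (γ : Fin m → (V →L[ℝ] ℝ)) (K : Set (Set (Fin m))) : UK K → UK K → Prop :=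
  fun x y => ∃ v : V, (fun i => Real.exp (γ i v) * x.1 i) = y.1

/-- The real moment-angle manifold
`R_K = {x ∈ ℝ^m : ∃ I ∈ K, |x i| = 1 for i ∉ I and |x i| ≤ 1 for i ∈ I}`. -/
def RK {m : ℕ} (K : Set (Set (Fin m))) : Set (Fin m → ℝ) :=
  {x | ∃ I ∈ K, (∀ i ∉ I, |x i| = 1) ∧ ∀ i ∈ I, |x i| ≤ 1}

/-!
In logarithmic coordinates `v` acts by translation by `(γ i v)ᵢ`, and by Gale duality these vectors
are exactly the linear relations among the `a i`. The fan condition says that a relation whose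
positive and negative parts are both supported on faces of `K` is trivial; applied to the
translation between two points of `R_K` in one orbit, this gives uniqueness. For existence,
completeness and a pigeonhole argument as `M → ∞` write `∑ -log |x i| • a i + M • ∑_{x i = 0} a i`
as a nonnegative combination `∑ c i • a i` on a face containing the zeros of `x`; the difference is
a relation `(γ i v)ᵢ`, and `v` moves `x` into `R_K`. Finally `R_K` is compact and the action on
`U(K)` is proper: if `v n → ∞` in a direction `u` while `x n` and `v n • x n` converge in `U(K)`,
the positive and negative parts of `(γ i u)ᵢ` are supported on faces, so `u = 0`. Hence the
retraction `U(K) → R_K` is continuous and descends to the inverse of `R_K → U(K)/V`.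
-/

open Filter Topology

namespace MomentAngle

theorem exists_homeomorph_quot_of_retraction {X S : Type*} [TopologicalSpace X]
    [TopologicalSpace S] {r : X → X → Prop} {i : S → X} {ρ : X → S} (hi : Continuous i)
    (hρ : Continuous ρ) (hρi : ∀ s, ρ (i s) = s) (hρr : ∀ x y, r x y → ρ x = ρ y)
    (hr : ∀ x, r x (i (ρ x))) : ∃ φ : S ≃ₜ Quot r, ∀ s, φ s = Quot.mk r (i s) :=
  ⟨{ toFun := fun s => Quot.mk r (i s)
     invFun := Quot.lift ρ hρr
     left_inv := hρi
     right_inv := Quot.ind fun x => (Quot.sound (hr x)).symm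
     continuous_toFun := continuous_quot_mk.comp hi
     continuous_invFun := continuous_quot_lift hρr hρ }, fun _ => rfl⟩

theorem nonneg_of_forall_mem_infinite {S : Set ℕ} (hS : S.Infinite) {b d : ℝ}
    (h : ∀ n ∈ S, 0 ≤ b + n * d) : 0 ≤ d := by
  by_contra! hd
  obtain ⟨n, hn, hlt⟩ := hS.exists_gt ⌈b / -d⌉₊
  have hbn : b < n * -d :=
    (div_lt_iff₀ (neg_pos.2 hd)).1 ((Nat.le_ceil _).trans_lt (by exact_mod_cast hlt))
  linarith [h n hn]

section Fan

variable {E : Type*} [NormedAddCommGroup E] [NormedSpace ℝ E] {m : ℕ}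
  {a : Fin m → E} {K : Set (Set (Fin m))}

def posCone (a : Fin m → E) (I : Set (Fin m)) : Set E :=
  {x | ∃ c : Fin m → ℝ, (∀ i ∉ I, c i = 0) ∧ (∀ i ∈ I, 0 < c i) ∧ x = ∑ i, c i • a i}

def IsFan (a : Fin m → E) (K : Set (Set (Fin m))) : Prop :=
  ∀ I ∈ K, ∀ J ∈ K, I ≠ J →
    intrinsicInterior ℝ (coneOf a I) ∩ intrinsicInterior ℝ (coneOf a J) = ∅

theorem posCone_subset_coneOf (a : Fin m → E) (I : Set (Fin m)) :
    posCone a I ⊆ coneOf a I := by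
  rintro _ ⟨c, hc0, hcpos, rfl⟩
  refine ⟨c, fun i => ?_, hc0, rfl⟩
  by_cases hi : i ∈ I
  · exact (hcpos i hi).le
  · exact (hc0 i hi).ge

theorem mem_intrinsicInterior_of_isOpen {F : Submodule ℝ E} {s : Set E} (hsF : s ⊆ F)
    {U : Set F} (hU : IsOpen U) (hUs : Subtype.val '' U ⊆ s) {x : F} (hx : x ∈ U) :
    (x : E) ∈ intrinsicInterior ℝ s := by
  have hspan : (affineSpan ℝ s : Set E) ⊆ F := fun z hz =>
    Submodule.span_le.2 hsF (affineSpan_le_toAffineSubspace_span hz)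
  let j : affineSpan ℝ s → F := fun z => ⟨z, hspan z.2⟩
  refine ⟨⟨x, subset_affineSpan ℝ _ (hUs ⟨x, hx, rfl⟩)⟩, mem_interior_iff_mem_nhds.2 ?_, rfl⟩
  refine Filter.mem_of_superset ((hU.preimage (by fun_prop : Continuous j)).mem_nhds hx) ?_
  exact fun z hz => hUs ⟨_, hz, rfl⟩

theorem posCone_subset_intrinsicInterior (a : Fin m → E) (I : Set (Fin m)) :
    posCone a I ⊆ intrinsicInterior ℝ (coneOf a I) := by
  classical
  rintro _ ⟨c, hc0, hcpos, rfl⟩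
  -- `posCone a I` is the image of the open set `O` under the surjection `L` onto its span
  let L := Fintype.linearCombination ℝ fun i => if i ∈ I then a i else 0
  let O : Set (Fin m → ℝ) := {d | ∀ i ∈ I, 0 < d i}
  have hL : ∀ d, (∀ i ∉ I, d i = 0) → L d = ∑ i, d i • a i := fun d hd => by
    refine (Fintype.linearCombination_apply ℝ _ d).trans (Finset.sum_congr rfl fun i _ => ?_)
    by_cases hi : i ∈ I <;> simp [hi, hd]
  have hO : IsOpen O := by
    simpa only [O, Set.ofPred_forall] using
      isOpen_iInter_of_finite fun i => isOpen_iInter_of_finite fun (_ : i ∈ I) =>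
        isOpen_lt continuous_const (continuous_apply i)
  rw [← hL c hc0]
  refine mem_intrinsicInterior_of_isOpen (F := LinearMap.range L) (x := L.rangeRestrict c) ?_
    (L.rangeRestrict.isOpenMap_of_finiteDimensional L.surjective_rangeRestrict _ hO) ?_
    ⟨c, hcpos, rfl⟩
  · rintro _ ⟨d, -, hd, rfl⟩
    exact ⟨d, hL d hd⟩
  · rintro _ ⟨_, ⟨d, hd, rfl⟩, rfl⟩
    refine ⟨fun i => if i ∈ I then d i else 0, fun i => ?_, fun i hi => by simp [hi], ?_⟩
    · by_cases hi : i ∈ I <;> simp [hi, (hd i _).le]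
    · refine (Fintype.linearCombination_apply ℝ _ d).trans (Finset.sum_congr rfl fun i _ => ?_)
      by_cases hi : i ∈ I <;> simp [hi]

theorem eq_of_mem_posCone (hfan : IsFan a K) {I J : Set (Fin m)} (hI : I ∈ K) (hJ : J ∈ K)
    {x : E} (hxI : x ∈ posCone a I) (hxJ : x ∈ posCone a J) : I = J := by
  by_contra hIJ
  exact (hfan I hI J hJ hIJ).subset
    ⟨posCone_subset_intrinsicInterior a I hxI, posCone_subset_intrinsicInterior a J hxJ⟩

theorem sum_posPart_smul_mem_posCone (a : Fin m → E) (s : Fin m → ℝ) :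
    ∑ i, (s i)⁺ • a i ∈ posCone a {i | 0 < s i} :=
  ⟨fun i => (s i)⁺, fun _ hi => posPart_eq_zero.2 (not_lt.1 hi),
    fun _ hi => posPart_pos_iff.2 hi, rfl⟩

theorem eq_zero_of_sum_smul_eq_zero (hfan : IsFan a K) {s : Fin m → ℝ}
    (hpos : {i | 0 < s i} ∈ K) (hneg : {i | s i < 0} ∈ K) (hs : ∑ i, s i • a i = 0) :
    s = 0 := by
  have hsplit : ∑ i, (s i)⁺ • a i = ∑ i, (-s i)⁺ • a i := by
    rw [← sub_eq_zero, ← Finset.sum_sub_distrib, ← hs]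
    refine Finset.sum_congr rfl fun i _ => ?_
    rw [← sub_smul, posPart_neg, posPart_sub_negPart]
  have hneg' : {i | 0 < -s i} ∈ K := by simpa only [neg_pos] using hneg
  have hIJ := eq_of_mem_posCone hfan hpos hneg' (sum_posPart_smul_mem_posCone a s)
    (hsplit ▸ sum_posPart_smul_mem_posCone a (-s))
  funext i
  have := Set.ext_iff.1 hIJ i
  simp only [Set.mem_ofPred_eq, neg_pos] at this
  rcases lt_trichotomy (s i) 0 with h | h | h
  · exact absurd (this.2 h) h.not_gt
  · exact h
  · exact absurd (this.1 h) h.not_gt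

theorem eq_of_sum_smul_eq (hK : IsLowerSet K) (hfan : IsFan a K) {S : Set (Fin m)} (hS : S ∈ K)
    {c c' : Fin m → ℝ} (hc : ∀ i ∉ S, c i = 0) (hc' : ∀ i ∉ S, c' i = 0)
    (h : ∑ i, c i • a i = ∑ i, c' i • a i) : c = c' := by
  have hsupp : ∀ p : ℝ → Prop, ¬ p 0 → {i | p (c i - c' i)} ∈ K := fun p hp =>
    hK (fun i hi => by_contra fun hiS => hp (by simpa [hc i hiS, hc' i hiS] using hi)) hS
  refine sub_eq_zero.1 (eq_zero_of_sum_smul_eq_zero hfan (hsupp _ (lt_irrefl 0))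
    (hsupp (· < 0) (lt_irrefl 0)) ?_)
  simp only [Pi.sub_apply, sub_smul, Finset.sum_sub_distrib, h, sub_self]

theorem exists_mem_posCone (hK : IsLowerSet K) (hcomplete : (⋃ I ∈ K, coneOf a I) = Set.univ)
    (ξ : E) : ∃ T ∈ K, ξ ∈ posCone a T := by
  obtain ⟨I, hI, c, hc0, hcI, rfl⟩ := Set.mem_iUnion₂.1 (hcomplete.symm ▸ Set.mem_univ ξ)
  refine ⟨{i | 0 < c i}, hK (fun i hi => by_contra fun hiI => ?_) hI, c,
    fun i hi => le_antisymm (not_lt.1 hi) (hc0 i), fun i hi => hi, rfl⟩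
  exact (ne_of_gt hi) (hcI i hiI)

theorem subset_of_add_smul_mem_posCone (hK : IsLowerSet K) (hfan : IsFan a K)
    {Z T : Set (Fin m)} (hZ : Z ∈ K) (hT : T ∈ K) {ξ η : E} (hη : η ∈ posCone a Z)
    {S : Set ℕ} (hS : S.Infinite) (hST : ∀ n ∈ S, ξ + (n : ℝ) • η ∈ posCone a T) : Z ⊆ T := by
  choose! c hc0 hcpos hc using hST
  simp only [← Fintype.linearCombination_apply ℝ a] at hc
  set L := Fintype.linearCombination ℝ a
  -- the coefficients of `ξ + n η` on `T` are affine in `n`, with slope `d` representing `η`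
  obtain ⟨n₁, hn₁⟩ := hS.nonempty
  obtain ⟨n₂, hn₂, h12⟩ := hS.exists_gt n₁
  have h12' : (0 : ℝ) < n₂ - n₁ := sub_pos.2 (by exact_mod_cast h12)
  set d : Fin m → ℝ := ((n₂ : ℝ) - n₁)⁻¹ • (c n₂ - c n₁)
  have hd0 : ∀ i ∉ T, d i = 0 := fun i hi => by simp [d, hc0 n₂ hn₂ i hi, hc0 n₁ hn₁ i hi]
  have hηd : η = L d := by
    rw [map_smul, map_sub, ← hc n₂ hn₂, ← hc n₁ hn₁, add_sub_add_left_eq_sub, ← sub_smul,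
      inv_smul_smul₀ h12'.ne']
  have hc_affine : ∀ n ∈ S, c n = c n₁ + ((n : ℝ) - n₁) • d := fun n hn => by
    refine eq_of_sum_smul_eq hK hfan hT (hc0 n hn) (fun i hi => ?_) ?_
    · simp [hc0 n₁ hn₁ i hi, hd0 i hi]
    · simp only [← Fintype.linearCombination_apply ℝ a]
      rw [map_add, map_smul, ← hc n hn, ← hc n₁ hn₁, ← hηd, sub_smul]
      abel
  have hd_nonneg : ∀ i, 0 ≤ d i := fun i =>
    nonneg_of_forall_mem_infinite hS (b := c n₁ i - n₁ * d i) fun n hn => by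
      have hcn : 0 ≤ c n i := by
        by_cases hi : i ∈ T
        · exact (hcpos n hn i hi).le
        · exact (hc0 n hn i hi).ge
      have := congrFun (hc_affine n hn) i
      simp only [Pi.add_apply, Pi.smul_apply, smul_eq_mul] at this
      linarith
  have hdT : {i | 0 < d i} ⊆ T := fun i hi => by_contra fun h => hi.ne' (hd0 i h)
  have hZd : Z = {i | 0 < d i} := eq_of_mem_posCone hfan hZ (hK hdT hT) hη
    ⟨d, fun i hi => le_antisymm (not_lt.1 hi) (hd_nonneg i), fun _ hi => hi,
      hηd.trans (Fintype.linearCombination_apply ℝ a d)⟩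
  exact hZd ▸ hdT

theorem exists_add_smul_mem_coneOf (hK : IsLowerSet K) (hfan : IsFan a K)
    (hcomplete : (⋃ I ∈ K, coneOf a I) = Set.univ) {Z : Set (Fin m)} (hZ : Z ∈ K) {η : E}
    (hη : η ∈ posCone a Z) (ξ : E) : ∃ M : ℝ, ∃ T ∈ K, Z ⊆ T ∧ ξ + M • η ∈ coneOf a T := by
  choose T hTK hT using fun n : ℕ => exists_mem_posCone hK hcomplete (ξ + (n : ℝ) • η)
  obtain ⟨T₀, hS⟩ := Finite.exists_infinite_fiber T
  replace hS : (T ⁻¹' {T₀}).Infinite := Set.infinite_coe_iff.1 hS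
  obtain ⟨n, hn : T n = T₀⟩ := hS.nonempty
  have hT₀ : T₀ ∈ K := hn ▸ hTK n
  have hST : ∀ k ∈ T ⁻¹' {T₀}, ξ + (k : ℝ) • η ∈ posCone a T₀ := fun k hk =>
    (hk : T k = T₀) ▸ hT k
  exact ⟨n, T₀, hT₀, subset_of_add_smul_mem_posCone hK hfan hZ hT₀ hη hS hST,
    posCone_subset_coneOf a _ (hn ▸ hT n)⟩

end Fan

section GaleDuality

variable {V : Type*} [NormedAddCommGroup V] [NormedSpace ℝ V] {m : ℕ}
  {E : Type*} [AddCommGroup E] [Module ℝ E]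

def IsGaleDual (γ : Fin m → (V →L[ℝ] ℝ)) (a : Fin m → E) : Prop :=
  ∀ s : Fin m → ℝ, ∑ i, s i • a i = 0 ↔ ∃ v : V, ∀ i, γ i v = s i

theorem IsGaleDual.sum_apply_smul_eq_zero {γ : Fin m → (V →L[ℝ] ℝ)} {a : Fin m → E}
    (hgale : IsGaleDual γ a) (v : V) : ∑ i, γ i v • a i = 0 :=
  (hgale _).2 ⟨v, fun _ => rfl⟩

theorem isGaleDual_of_ker {γ : Fin m → (V →L[ℝ] ℝ)} {W : Submodule ℝ (Fin m → ℝ)}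
    {a : Fin m → (W →L[ℝ] ℝ)} (hW : ∀ y : Fin m → ℝ, y ∈ W ↔ ∑ i, y i • γ i = 0)
    (ha : ∀ (i : Fin m) (w : W), a i w = (w : Fin m → ℝ) i) : IsGaleDual γ a := by
  classical
  intro s
  constructor
  · intro hs
    -- `s` annihilates `W = ker Γ`, hence lies in the range of the transpose `v ↦ (γ i v)ᵢ`
    let ψ : V →ₗ[ℝ] Fin m → ℝ := LinearMap.pi fun i => (γ i : V →ₗ[ℝ] ℝ)
    suffices s ∈ LinearMap.range ψ by
      obtain ⟨v, hv⟩ := this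
      exact ⟨v, fun i => congrFun hv i⟩
    rw [← Subspace.forall_mem_dualAnnihilator_apply_eq_zero_iff]
    intro σ hσ
    let w : Fin m → ℝ := fun i => σ fun j => if i = j then 1 else 0
    have hw : w ∈ W := by
      refine (hW w).2 (ContinuousLinearMap.ext fun v => ?_)
      have := (Submodule.mem_dualAnnihilator σ).1 hσ (ψ v) ⟨v, rfl⟩
      rw [σ.pi_apply_eq_sum_univ] at this
      simpa [w, ψ, mul_comm] using this
    have := congrArg (fun f => f ⟨w, hw⟩) hs
    rw [σ.pi_apply_eq_sum_univ]
    simpa [ha, w] using this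
  · rintro ⟨v, hv⟩
    obtain rfl : s = fun i => γ i v := funext fun i => (hv i).symm
    ext w
    simpa [ha, mul_comm] using congrArg (· v) ((hW w).1 w.2)

theorem eq_zero_of_forall_apply_eq_zero {γ : Fin m → (V →L[ℝ] ℝ)}
    (hspan : Submodule.span ℝ (Set.range γ) = ⊤) {v : V} (hv : ∀ i, γ i v = 0) : v = 0 := by
  have hker : Submodule.span ℝ (Set.range γ) ≤
      LinearMap.ker (ContinuousLinearMap.apply ℝ ℝ v).toLinearMap :=
    Submodule.span_le.2 (Set.range_subset_iff.2 hv)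
  exact SeparatingDual.eq_zero_of_forall_dual_eq_zero fun f => hker (hspan ▸ Submodule.mem_top)

end GaleDuality

section Action

variable {V : Type*} [NormedAddCommGroup V] [NormedSpace ℝ V] {m : ℕ}
  {E : Type*} [NormedAddCommGroup E] [NormedSpace ℝ E]
  {γ : Fin m → (V →L[ℝ] ℝ)} {a : Fin m → E} {K : Set (Set (Fin m))}

noncomputable def expAct (γ : Fin m → (V →L[ℝ] ℝ)) (v : V) (x : Fin m → ℝ) : Fin m → ℝ :=
  fun i => Real.exp (γ i v) * x i

@[simp]
theorem expAct_apply (v : V) (x : Fin m → ℝ) (i : Fin m) :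
    expAct γ v x i = Real.exp (γ i v) * x i :=
  rfl

@[simp]
theorem expAct_zero (x : Fin m → ℝ) : expAct γ 0 x = x := by
  ext i
  simp

theorem expAct_add (v w : V) (x : Fin m → ℝ) : expAct γ (v + w) x = expAct γ v (expAct γ w x) := by
  ext i
  simp [Real.exp_add, mul_assoc]

theorem RK_subset (hK : IsLowerSet K) : RK K ⊆ {x : Fin m → ℝ | {i | x i = 0} ∈ K} := by
  rintro x ⟨I, hI, hI1, -⟩
  exact hK (fun i hi => by_contra fun hiI => by simpa [hi.out] using hI1 i hiI) hI

theorem abs_le_one_of_mem_RK {y : Fin m → ℝ} (hy : y ∈ RK K) (i : Fin m) : |y i| ≤ 1 := by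
  obtain ⟨I, -, hI1, hI⟩ := hy
  by_cases hi : i ∈ I
  · exact hI i hi
  · exact (hI1 i hi).le

theorem isCompact_RK : IsCompact (RK K) := by
  have hRK : RK K = ⋃ I ∈ K, Metric.closedBall 0 1 ∩ ⋂ i ∈ Iᶜ, {x : Fin m → ℝ | |x i| = 1} := by
    ext x
    simp only [Set.mem_iUnion₂, Set.mem_inter_iff, Set.mem_iInter₂, Metric.mem_closedBall,
      dist_zero_right, pi_norm_le_iff_of_nonneg zero_le_one, Real.norm_eq_abs, Set.mem_compl_iff,
      Set.mem_ofPred_eq]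
    constructor
    · intro hx
      have ⟨I, hI, hI1, _⟩ := hx
      exact ⟨I, hI, abs_le_one_of_mem_RK hx, hI1⟩
    · rintro ⟨I, hI, hx, hI1⟩
      exact ⟨I, hI, hI1, fun i _ => hx i⟩
  rw [hRK]
  exact (Set.toFinite K).isCompact_biUnion fun I _ => (isCompact_closedBall 0 1).inter_right
    (isClosed_biInter fun i _ => isClosed_eq (continuous_apply i).abs continuous_const)

theorem exists_expAct_mem_RK (hK : IsLowerSet K) (hfan : IsFan a K)
    (hcomplete : (⋃ I ∈ K, coneOf a I) = Set.univ) (hgale : IsGaleDual γ a)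
    {x : Fin m → ℝ} (hx : {i | x i = 0} ∈ K) : ∃ v : V, expAct γ v x ∈ RK K := by
  classical
  let ind : Fin m → ℝ := fun i => if x i = 0 then 1 else 0
  have hη : ∑ i, ind i • a i ∈ posCone a {i | x i = 0} :=
    ⟨ind, fun i hi => if_neg hi, fun i hi => by simp [ind, hi.out], rfl⟩
  obtain ⟨M, T, hT, hZT, c, hc_nonneg, hc0, hc⟩ :=
    exists_add_smul_mem_coneOf hK hfan hcomplete hx hη (∑ i, (-Real.log |x i|) • a i)
  -- by Gale duality this relation is `(γ i v)ᵢ` for some `v`, which moves `log |x i|` to `-c i`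
  have hrel : ∑ i, (-Real.log |x i| + M * ind i - c i) • a i = 0 := by
    simp only [← Fintype.linearCombination_apply ℝ a] at hc ⊢
    change Fintype.linearCombination ℝ a ((fun i => -Real.log |x i|) + M • ind - c) = 0
    rw [map_sub, map_add, map_smul, hc, sub_self]
  obtain ⟨v, hv⟩ := (hgale _).1 hrel
  have habs : ∀ i, x i ≠ 0 → |expAct γ v x i| = Real.exp (-c i) := fun i hi => by
    rw [expAct_apply, abs_mul, Real.abs_exp, hv]
    have hind : ind i = 0 := if_neg hi
    rw [hind, mul_zero, add_zero, sub_eq_add_neg, Real.exp_add, Real.exp_neg (Real.log _),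
      Real.exp_log (abs_pos.2 hi)]
    field_simp
  refine ⟨v, T, hT, fun i hi => ?_, fun i _ => ?_⟩
  · rw [habs i fun h => hi (hZT h), hc0 i hi, neg_zero, Real.exp_zero]
  · by_cases hi : x i = 0
    · simp [hi]
    · rw [habs i hi, Real.exp_le_one_iff, neg_nonpos]
      exact hc_nonneg i

theorem pos_subset_of_mem_RK {y : Fin m → ℝ} {I : Set (Fin m)} (hI : ∀ i ∉ I, |y i| = 1) {v : V}
    (hv : expAct γ v y ∈ RK K) : {i | 0 < γ i v} ⊆ I := fun i hi => by_contra fun hiI => by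
  have := abs_le_one_of_mem_RK hv i
  rw [expAct_apply, abs_mul, Real.abs_exp, hI i hiI, mul_one, Real.exp_le_one_iff] at this
  exact this.not_gt hi

theorem expAct_eq_self_of_mem_RK (hK : IsLowerSet K) (hfan : IsFan a K) (hgale : IsGaleDual γ a)
    {y : Fin m → ℝ} (hy : y ∈ RK K) {v : V} (hvy : expAct γ v y ∈ RK K) : expAct γ v y = y := by
  have ⟨I, hI, hI1, _⟩ := hy
  have ⟨J, hJ, hJ1, _⟩ := hvy
  have hneg : {i | γ i v < 0} ⊆ J := by
    simpa using pos_subset_of_mem_RK (v := -v) hJ1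
      (by rwa [← expAct_add, neg_add_cancel, expAct_zero])
  have hv := eq_zero_of_sum_smul_eq_zero hfan (hK (pos_subset_of_mem_RK hI1 hvy) hI) (hK hneg hJ)
    (hgale.sum_apply_smul_eq_zero v)
  ext i
  simp [congrFun hv i]

theorem expAct_eq_of_mem_RK (hK : IsLowerSet K) (hfan : IsFan a K) (hgale : IsGaleDual γ a)
    {x : Fin m → ℝ} {v w : V} (hv : expAct γ v x ∈ RK K) (hw : expAct γ w x ∈ RK K) :
    expAct γ w x = expAct γ v x := by
  rw [← sub_add_cancel w v, expAct_add] at hw ⊢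
  exact expAct_eq_self_of_mem_RK hK hfan hgale hv hw

end Action

section Properness

variable {V : Type*} [NormedAddCommGroup V] [NormedSpace ℝ V] {m : ℕ}
  {E : Type*} [NormedAddCommGroup E] [NormedSpace ℝ E]
  {γ : Fin m → (V →L[ℝ] ℝ)} {a : Fin m → E} {K : Set (Set (Fin m))}

theorem continuous_expAct : Continuous fun p : V × (Fin m → ℝ) => expAct γ p.1 p.2 :=
  continuous_pi fun i => (Real.continuous_exp.comp ((γ i).continuous.comp continuous_fst)).mul
    ((continuous_apply i).comp continuous_snd)

theorem tendsto_apply_atTop_of_tendsto_normalize {ι : Type*} {l : Filter ι} {v : ι → V} {u : V}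
    (f : V →L[ℝ] ℝ) (hv : Tendsto (fun n => ‖v n‖) l atTop)
    (hu : Tendsto (fun n => ‖v n‖⁻¹ • v n) l (𝓝 u)) (hf : 0 < f u) :
    Tendsto (fun n => f (v n)) l atTop := by
  refine (hv.atTop_mul_pos hf ((f.continuous.tendsto u).comp hu)).congr' ?_
  filter_upwards [hv.eventually_gt_atTop 0] with n hn
  simp [mul_inv_cancel_left₀ hn.ne']

theorem tendsto_expAct_apply_zero {ι : Type*} {l : Filter ι} {v : ι → V} {x : ι → Fin m → ℝ}
    {p : Fin m → ℝ} {i : Fin m} (hv : Tendsto (fun n => γ i (v n)) l atBot)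
    (hx : Tendsto x l (𝓝 p)) : Tendsto (fun n => expAct γ (v n) (x n) i) l (𝓝 0) := by
  simpa using (Real.tendsto_exp_atBot.comp hv).mul (tendsto_pi_nhds.1 hx i)

theorem pos_subset_zeros_of_tendsto {ι : Type*} {l : Filter ι} [l.NeBot] {v : ι → V} {u : V}
    {x : ι → Fin m → ℝ} {p q : Fin m → ℝ} (hv : Tendsto (fun n => ‖v n‖) l atTop)
    (hu : Tendsto (fun n => ‖v n‖⁻¹ • v n) l (𝓝 u)) (hx : Tendsto x l (𝓝 p))
    (hy : Tendsto (fun n => expAct γ (v n) (x n)) l (𝓝 q)) :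
    {i | 0 < γ i u} ⊆ {i | p i = 0} := fun i hi => by
  have hbot : Tendsto (fun n => γ i (-v n)) l atBot := by
    simpa using tendsto_apply_atTop_of_tendsto_normalize (γ i) hv hu hi
  have := tendsto_expAct_apply_zero hbot hy
  simp only [← expAct_add, neg_add_cancel, expAct_zero] at this
  exact tendsto_nhds_unique (tendsto_pi_nhds.1 hx i) this

variable [FiniteDimensional ℝ V]

/-- The action is proper on `U(K)`. -/
theorem exists_subseq_tendsto_of_tendsto_expAct (hspan : Submodule.span ℝ (Set.range γ) = ⊤)
    (hK : IsLowerSet K) (hfan : IsFan a K) (hgale : IsGaleDual γ a)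
    {v : ℕ → V} {x : ℕ → Fin m → ℝ} {p q : Fin m → ℝ} (hp : {i | p i = 0} ∈ K)
    (hq : {i | q i = 0} ∈ K) (hx : Tendsto x atTop (𝓝 p))
    (hy : Tendsto (fun n => expAct γ (v n) (x n)) atTop (𝓝 q)) :
    ∃ v₀ : V, ∃ φ : ℕ → ℕ, StrictMono φ ∧ Tendsto (v ∘ φ) atTop (𝓝 v₀) := by
  by_cases hbdd : ∃ b, ∃ᶠ n in atTop, v n ∈ Metric.closedBall (0 : V) b
  · obtain ⟨b, hb⟩ := hbdd
    obtain ⟨v₀, -, φ, hφ, hlim⟩ :=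
      tendsto_subseq_of_frequently_bounded Metric.isBounded_closedBall hb
    exact ⟨v₀, φ, hφ, hlim⟩
  -- otherwise `‖v n‖ → ∞`, and a limiting direction `u` is a unit vector with `γ u = 0`
  push Not at hbdd
  have hv : Tendsto (fun n => ‖v n‖) atTop atTop :=
    tendsto_atTop.2 fun b => (hbdd b).mono fun n hn => (by simpa using hn : b < ‖v n‖).le
  obtain ⟨u, hu, φ, hφ, hlim⟩ := tendsto_subseq_of_frequently_bounded
    (Metric.isBounded_sphere (x := (0 : V)) (r := 1)) (x := fun n => ‖v n‖⁻¹ • v n)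
    ((hv.eventually_gt_atTop 0).mono fun n hn => by simp [norm_smul, hn.ne']).frequently
  rw [Metric.isClosed_sphere.closure_eq, mem_sphere_zero_iff_norm] at hu
  have hvφ := hv.comp hφ.tendsto_atTop
  have hpos := pos_subset_zeros_of_tendsto hvφ hlim (hx.comp hφ.tendsto_atTop)
    (hy.comp hφ.tendsto_atTop)
  have hneg : {i | γ i u < 0} ⊆ {i | q i = 0} := by
    simpa using pos_subset_zeros_of_tendsto (v := fun n => -v (φ n)) (u := -u)
      (by simpa only [norm_neg, Function.comp_def] using hvφ) (by simpa using hlim.neg)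
      (hy.comp hφ.tendsto_atTop)
      (by simpa [← expAct_add, Function.comp_def] using hx.comp hφ.tendsto_atTop)
  have hγ := eq_zero_of_sum_smul_eq_zero hfan (hK hpos hp) (hK hneg hq)
    (hgale.sum_apply_smul_eq_zero u)
  simp [eq_zero_of_forall_apply_eq_zero hspan fun i => congrFun hγ i] at hu

theorem exists_expAct_eq_of_tendsto (hspan : Submodule.span ℝ (Set.range γ) = ⊤)
    (hK : IsLowerSet K) (hfan : IsFan a K) (hgale : IsGaleDual γ a)
    {v : ℕ → V} {x : ℕ → Fin m → ℝ} {p q : Fin m → ℝ} (hp : {i | p i = 0} ∈ K)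
    (hq : {i | q i = 0} ∈ K) (hx : Tendsto x atTop (𝓝 p))
    (hy : Tendsto (fun n => expAct γ (v n) (x n)) atTop (𝓝 q)) : ∃ v₀ : V, expAct γ v₀ p = q := by
  obtain ⟨v₀, φ, hφ, hlim⟩ :=
    exists_subseq_tendsto_of_tendsto_expAct hspan hK hfan hgale hp hq hx hy
  exact ⟨v₀, tendsto_nhds_unique ((continuous_expAct.tendsto _).comp
    (hlim.prodMk_nhds (hx.comp hφ.tendsto_atTop))) (hy.comp hφ.tendsto_atTop)⟩

theorem continuous_expAct_of_mem_RK (hspan : Submodule.span ℝ (Set.range γ) = ⊤)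
    (hK : IsLowerSet K) (hfan : IsFan a K) (hgale : IsGaleDual γ a)
    (v : UK K → V) (hv : ∀ x, expAct γ (v x) x.1 ∈ RK K) :
    Continuous fun x : UK K => expAct γ (v x) x.1 := by
  -- `RK K` is compact, and every limit of a subsequence lies in the orbit of the limit point
  refine continuous_iff_seqContinuous.2 fun xs p hxs => tendsto_of_subseq_tendsto fun ns hns => ?_
  obtain ⟨q, hq, ms, hms, hlim⟩ := isCompact_RK.tendsto_subseq fun n => hv (xs (ns n))
  have hx : Tendsto (fun n => (xs (ns (ms n))).1) atTop (𝓝 p.1) :=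
    (continuous_subtype_val.tendsto p).comp ((hxs.comp hns).comp hms.tendsto_atTop)
  obtain ⟨w, rfl⟩ := exists_expAct_eq_of_tendsto hspan hK hfan hgale p.2 (RK_subset hK hq) hx hlim
  rw [expAct_eq_of_mem_RK hK hfan hgale (hv p) hq] at hlim
  exact ⟨ms, hlim⟩

end Properness

end MomentAngle

open MomentAngle

theorem stmt9_general {V : Type*} [NormedAddCommGroup V] [NormedSpace ℝ V]
    [FiniteDimensional ℝ V] {m : ℕ} (γ : Fin m → (V →L[ℝ] ℝ))
    (hspan : Submodule.span ℝ (Set.range γ) = ⊤)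
    (W : Submodule ℝ (Fin m → ℝ))
    (hW : ∀ y : Fin m → ℝ, y ∈ W ↔ ∑ i, y i • γ i = 0)
    (a : Fin m → (W →L[ℝ] ℝ))
    (ha : ∀ (i : Fin m) (w : W), a i w = (w : Fin m → ℝ) i)
    (K : Set (Set (Fin m)))
    (hKdown : ∀ I ∈ K, ∀ J ⊆ I, J ∈ K)
    (hfan : ∀ I ∈ K, ∀ J ∈ K, I ≠ J →
      intrinsicInterior ℝ (coneOf a I) ∩ intrinsicInterior ℝ (coneOf a J) = ∅)
    (hcomplete : (⋃ I ∈ K, coneOf a I) = Set.univ) :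
    RK K ⊆ {x : Fin m → ℝ | {i | x i = 0} ∈ K} ∧
    (∀ x : Fin m → ℝ, {i | x i = 0} ∈ K →
      ∃! y : Fin m → ℝ, y ∈ RK K ∧
        ∃ v : V, (fun i => Real.exp (γ i v) * x i) = y) ∧
    ∃ φ : RK K ≃ₜ Quot (orbitRel γ K),
      ∀ (y : RK K) (h : {i | (y : Fin m → ℝ) i = 0} ∈ K),
        φ y = Quot.mk (orbitRel γ K) ⟨(y : Fin m → ℝ), h⟩ := by
  have hK : IsLowerSet K := fun I J hJI hI => hKdown I hI J hJI
  have hgale : IsGaleDual γ a := isGaleDual_of_ker hW ha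
  replace hfan : IsFan a K := hfan
  have hsub := RK_subset hK
  have hexists : ∀ x : Fin m → ℝ, {i | x i = 0} ∈ K → ∃ v : V, expAct γ v x ∈ RK K :=
    fun _ => exists_expAct_mem_RK hK hfan hcomplete hgale
  have hunique : ∀ (x : Fin m → ℝ) (v w : V), expAct γ v x ∈ RK K → expAct γ w x ∈ RK K →
      expAct γ w x = expAct γ v x :=
    fun _ _ _ => expAct_eq_of_mem_RK hK hfan hgale
  refine ⟨hsub, fun x hx => ?_, ?_⟩
  · obtain ⟨v, hv⟩ := hexists x hx
    refine ⟨_, ⟨hv, v, rfl⟩, ?_⟩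
    rintro _ ⟨hy, w, rfl⟩
    exact hunique x v w hv hy
  choose v hv using fun x : UK K => hexists x.1 x.2
  obtain ⟨φ, hφ⟩ := exists_homeomorph_quot_of_retraction (r := orbitRel γ K)
    (i := fun y : RK K => (⟨y, hsub y.2⟩ : UK K)) (ρ := fun x => ⟨expAct γ (v x) x.1, hv x⟩)
    (by fun_prop) ((continuous_expAct_of_mem_RK hspan hK hfan hgale v hv).subtype_mk hv)
    (fun y => Subtype.ext (expAct_eq_self_of_mem_RK hK hfan hgale y.2 (hv _)))
    (fun x y ⟨w, hw⟩ => Subtype.ext <| by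
      change expAct γ w x.1 = y.1 at hw
      change expAct γ (v x) x.1 = expAct γ (v y) y.1
      rw [← hw, ← expAct_add]
      exact (hunique _ _ _ (hv x) (by rw [expAct_add, hw]; exact hv y)).symm)
    (fun x => ⟨v x, rfl⟩)
  exact ⟨φ, fun y _ => hφ y⟩

/-- Under the fan and completeness conditions, `R_K ⊆ U(K)`,
every `V`-orbit of the exponential action on `U(K)` meets `R_K` in exactly one
point, and the composite of the inclusion `R_K ↪ U(K)` with the quotient
projection is a homeomorphism `R_K ≅ U(K)/V`. -/
theorem stmt9 {V : Type*} [NormedAddCommGroup V] [NormedSpace ℝ V]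
    [FiniteDimensional ℝ V] {m : ℕ} (γ : Fin m → (V →L[ℝ] ℝ))
    (hspan : Submodule.span ℝ (Set.range γ) = ⊤)
    (W : Submodule ℝ (Fin m → ℝ))
    (hW : ∀ y : Fin m → ℝ, y ∈ W ↔ ∑ i, y i • γ i = 0)
    (a : Fin m → (W →L[ℝ] ℝ))
    (ha : ∀ (i : Fin m) (w : W), a i w = (w : Fin m → ℝ) i)
    (K : Set (Set (Fin m))) (hKempty : ∅ ∈ K)
    (hKdown : ∀ I ∈ K, ∀ J ⊆ I, J ∈ K)
    (hfan : ∀ I ∈ K, ∀ J ∈ K, I ≠ J →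
      intrinsicInterior ℝ (coneOf a I) ∩ intrinsicInterior ℝ (coneOf a J) = ∅)
    (hcomplete : (⋃ I ∈ K, coneOf a I) = Set.univ) :
    RK K ⊆ {x : Fin m → ℝ | {i | x i = 0} ∈ K} ∧
    (∀ x : Fin m → ℝ, {i | x i = 0} ∈ K →
      ∃! y : Fin m → ℝ, y ∈ RK K ∧
        ∃ v : V, (fun i => Real.exp (γ i v) * x i) = y) ∧
    ∃ φ : RK K ≃ₜ Quot (orbitRel γ K),
      ∀ (y : RK K) (h : {i | (y : Fin m → ℝ) i = 0} ∈ K),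
        φ y = Quot.mk (orbitRel γ K) ⟨(y : Fin m → ℝ), h⟩ :=
  stmt9_general γ hspan W hW a ha K hKdown hfan hcomplete
end

section
/- Let b₁,…,b_m ∈ ℝ and δ = Σ_{i=1}^m b_i γ_i ∈ V*. For a subset I ⊆ {1,…,m}: δ ∈ relint(cone{γ_i : i ∉ I}) if and only if there exists w ∈ W such that w_i + b_i = 0 for all i ∈ I and w_i + b_i > 0 for all i ∉ I, where w_i denotes the i-th coordinate of w as an element of ℝ^m (equivalently w_i = a_i(w)). -/
open Filter Topology Set

theorem mem_intrinsicInterior_iff_mem_nhdsWithin {𝕜 V P : Type*} [Ring 𝕜] [AddCommGroup V]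
    [Module 𝕜 V] [TopologicalSpace P] [AddTorsor V P] {s : Set P} {x : P} :
    x ∈ intrinsicInterior 𝕜 s ↔ x ∈ affineSpan 𝕜 s ∧ s ∈ 𝓝[affineSpan 𝕜 s] x := by
  simp only [intrinsicInterior, mem_image, mem_interior_iff_mem_nhds]
  constructor
  · rintro ⟨x, hx, rfl⟩
    exact ⟨x.2, preimage_coe_mem_nhds_subtype.mp hx⟩
  · rintro ⟨hx, hs⟩
    exact ⟨⟨x, hx⟩, preimage_coe_mem_nhds_subtype.mpr hs, rfl⟩

theorem exists_mem_openSegment_of_mem_intrinsicInterior {E : Type*} [AddCommGroup E]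
    [Module ℝ E] [TopologicalSpace E] [ContinuousAdd E] [ContinuousSMul ℝ E] {s : Set E} {x p : E}
    (hx : x ∈ intrinsicInterior ℝ s) (hp : p ∈ affineSpan ℝ s) :
    ∃ y ∈ s, x ∈ openSegment ℝ p y := by
  rw [mem_intrinsicInterior_iff_mem_nhdsWithin] at hx
  obtain ⟨hxA, hs⟩ := hx
  set g : ℝ → E := fun t => x + t • (x - p)
  have hg : Tendsto g (𝓝 0) (𝓝[affineSpan ℝ s] x) := by
    refine tendsto_nhdsWithin_iff.mpr ⟨?_, Eventually.of_forall fun t => ?_⟩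
    · exact (by fun_prop : Continuous g).tendsto' 0 x (by simp [g])
    · have := (affineSpan ℝ s).smul_vsub_vadd_mem t hxA hp hxA
      rwa [vsub_eq_sub, vadd_eq_add, add_comm] at this
  obtain ⟨t, hts, ht⟩ := ((hg.eventually hs).filter_mono nhdsWithin_le_nhds |>.and
    (self_mem_nhdsWithin : Ioi (0:ℝ) ∈ 𝓝[>] 0)).exists
  refine ⟨g t, hts, t / (1 + t), 1 / (1 + t), by positivity, by positivity, by field_simp; ring, ?_⟩
  simp only [g]
  match_scalars <;> field_simp
  ring

theorem LinearMap.image_mem_nhdsWithin_range {G E : Type*} [NormedAddCommGroup G]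
    [NormedSpace ℝ G] [FiniteDimensional ℝ G] [NormedAddCommGroup E] [NormedSpace ℝ E]
    (f : G →ₗ[ℝ] E) {x : G} {t : Set G} (ht : t ∈ 𝓝 x) :
    f '' t ∈ 𝓝[LinearMap.range f] (f x) := by
  have := (f.rangeRestrict.isOpenMap_of_finiteDimensional f.surjective_rangeRestrict).image_mem_nhds
    ht
  rwa [mem_nhds_subtype_iff_nhdsWithin, image_image] at this

section coneOf

variable {E : Type*} [NormedAddCommGroup E] [NormedSpace ℝ E] {m : ℕ} (v : Fin m → E)
  (J : Set (Fin m))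

theorem affineSpan_coneOf_le :
    affineSpan ℝ (coneOf v J) ≤
      (LinearMap.range (Fintype.linearCombination ℝ v ∘ₗ
        (Submodule.pi Jᶜ fun _ => ⊥).subtype)).toAffineSubspace := by
  refine affineSpan_le.mpr ?_
  rintro _ ⟨c, -, hc, rfl⟩
  exact ⟨⟨c, by simpa using hc⟩, by simp [Fintype.linearCombination_apply]⟩

theorem mem_intrinsicInterior_coneOf_iff [FiniteDimensional ℝ E] {x : E} :
    x ∈ intrinsicInterior ℝ (coneOf v J) ↔
      ∃ c : Fin m → ℝ, (∀ i ∈ J, 0 < c i) ∧ (∀ i ∉ J, c i = 0) ∧ x = ∑ i, c i • v i := by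
  constructor
  · intro hx
    have hχ : ∑ i, J.indicator 1 i • v i ∈ coneOf v J :=
      ⟨J.indicator 1, J.indicator_nonneg fun _ _ => zero_le_one,
        fun _ hi => J.indicator_of_notMem hi _, rfl⟩
    obtain ⟨_, ⟨d, hd, hdJ, rfl⟩, a, b, ha, hb, -, rfl⟩ :=
      exists_mem_openSegment_of_mem_intrinsicInterior hx (subset_affineSpan ℝ _ hχ)
    refine ⟨a • J.indicator 1 + b • d, fun i hi => ?_, fun i hi => ?_, ?_⟩
    · have := hd i
      simp only [Pi.add_apply, Pi.smul_apply, J.indicator_of_mem hi, Pi.one_apply, smul_eq_mul]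
      positivity
    · simp [hi, hdJ i hi]
    · simp [add_smul, Finset.sum_add_distrib, Finset.smul_sum, smul_smul]
  · rintro ⟨c, hcJ, hc, rfl⟩
    have hcone : ∑ i, c i • v i ∈ coneOf v J := by
      refine ⟨c, fun i => ?_, hc, rfl⟩
      by_cases hi : i ∈ J
      exacts [(hcJ i hi).le, (hc i hi).ge]
    refine mem_intrinsicInterior_iff_mem_nhdsWithin.mpr ⟨subset_affineSpan ℝ _ hcone, ?_⟩
    set U := Submodule.pi Jᶜ fun _ => (⊥ : Submodule ℝ ℝ)
    set f := Fintype.linearCombination ℝ v ∘ₗ U.subtype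
    have hpos : {u : U | ∀ i ∈ J, 0 < (u : Fin m → ℝ) i} ∈ 𝓝 (⟨c, by simpa [U] using hc⟩ : U) :=
      ((isOpen_set_pi J.toFinite fun _ _ => isOpen_Ioi).preimage continuous_subtype_val).mem_nhds
        hcJ
    refine mem_of_superset (nhdsWithin_mono _ (affineSpan_coneOf_le v J)
      (f.image_mem_nhdsWithin_range hpos)) ?_
    rintro _ ⟨u, hu, rfl⟩
    have hu0 : ∀ i ∉ J, (u : Fin m → ℝ) i = 0 := fun i hi =>
      (Submodule.mem_bot ℝ).mp (Submodule.mem_pi.mp u.2 i hi)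
    refine ⟨u, fun i => ?_, hu0, rfl⟩
    by_cases hi : i ∈ J
    exacts [(hu i hi).le, (hu0 i hi).ge]

end coneOf

theorem stmt10_general {V : Type*} [NormedAddCommGroup V] [NormedSpace ℝ V]
    [FiniteDimensional ℝ V] {m : ℕ} (γ : Fin m → (V →L[ℝ] ℝ))
    (W : Submodule ℝ (Fin m → ℝ))
    (hW : ∀ y : Fin m → ℝ, y ∈ W ↔ ∑ i, y i • γ i = 0)
    (b : Fin m → ℝ) (I : Set (Fin m)) :
    (∑ i, b i • γ i) ∈ intrinsicInterior ℝ (coneOf γ Iᶜ) ↔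
      ∃ w : W, (∀ i ∈ I, (w : Fin m → ℝ) i + b i = 0) ∧
        ∀ i ∉ I, 0 < (w : Fin m → ℝ) i + b i := by
  rw [mem_intrinsicInterior_coneOf_iff]
  constructor
  · rintro ⟨c, hpos, hzero, hc⟩
    refine ⟨⟨c - b, (hW _).mpr ?_⟩, fun i hi => ?_, fun i hi => ?_⟩
    · rw [← sub_eq_zero.mpr hc.symm, ← Finset.sum_sub_distrib]
      exact Finset.sum_congr rfl fun i _ => sub_smul (c i) (b i) (γ i)
    · simpa using hzero i (by simpa using hi)
    · simpa using hpos i hi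
  · rintro ⟨w, hwI, hwpos⟩
    refine ⟨fun i => w.1 i + b i, hwpos, fun i hi => hwI i (by simpa using hi), ?_⟩
    simp [add_smul, Finset.sum_add_distrib, (hW w).mp w.2]

/-- For `δ = Σ b i • γ i` and `I ⊆ {1,…,m}`:
`δ ∈ relint cone{γ i : i ∉ I}` iff there is `w ∈ W` with `w i + b i = 0` for
`i ∈ I` and `w i + b i > 0` for `i ∉ I`. -/
theorem stmt10 {V : Type*} [NormedAddCommGroup V] [NormedSpace ℝ V]
    [FiniteDimensional ℝ V] {m : ℕ} (γ : Fin m → (V →L[ℝ] ℝ))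
    (hspan : Submodule.span ℝ (Set.range γ) = ⊤)
    (W : Submodule ℝ (Fin m → ℝ))
    (hW : ∀ y : Fin m → ℝ, y ∈ W ↔ ∑ i, y i • γ i = 0)
    (a : Fin m → (W →L[ℝ] ℝ))
    (ha : ∀ (i : Fin m) (w : W), a i w = (w : Fin m → ℝ) i)
    (b : Fin m → ℝ) (I : Set (Fin m)) :
    (∑ i, b i • γ i) ∈ intrinsicInterior ℝ (coneOf γ Iᶜ) ↔
      ∃ w : W, (∀ i ∈ I, (w : Fin m → ℝ) i + b i = 0) ∧
        ∀ i ∉ I, 0 < (w : Fin m → ℝ) i + b i :=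
  stmt10_general γ W hW b I
end

section
/- Suppose the polyhedron P is generic. Then for every x ∈ ℝ^m with μ(x) = δ: (i) the set {i : x_i = 0} belongs to K_P (hence the level set μ^{-1}(δ) is contained in U(K_P) = {x ∈ ℝ^m : {i : x_i = 0} ∈ K_P}); and (ii) the set of vectors {γ_i : x_i ≠ 0} spans V* (so that δ is a regular value of μ). -/
/-!
The equation `μ(x) = δ` says that `(x i ^ 2 - b i)ᵢ` is orthogonal to `V = ker A`, the space of
linear relations among the `a i`; orthogonal complements being double annihilators, this vector
is `(a i w)ᵢ` for some `w ∈ W`. Then `a i w + b i = x i ^ 2 ≥ 0`, so `w ∈ P` and the constraints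
active at `w` are exactly those with `x i = 0`. A vector of `V` killed by every `γ i` with
`x i ≠ 0` is a linear relation among the constraints active at `w`, hence zero by genericity;
so these `γ i` have no common zero on `V` and span `V*`.
-/

theorem LinearMap.mem_range_of_forall_dotProduct_eq_zero {K W ι : Type*} [Field K]
    [AddCommGroup W] [Module K W] [Fintype ι] {T : W →ₗ[K] ι → K} {c : ι → K}
    (h : ∀ y : ι → K, (∀ w, y ⬝ᵥ T w = 0) → y ⬝ᵥ c = 0) : c ∈ range T := by
  classical
  rw [← Subspace.forall_mem_dualAnnihilator_apply_eq_zero_iff]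
  intro φ hφ
  obtain ⟨y, rfl⟩ := (dotProductEquiv K ι).surjective φ
  exact h y fun w => (Submodule.mem_dualAnnihilator _).1 hφ _ (mem_range_self T w)

theorem LinearIndependent.eq_zero_of_sum_smul_eq_zero {R M ι : Type*} [Ring R]
    [AddCommGroup M] [Module R M] [Fintype ι] {p : ι → Prop} [DecidablePred p] {f : ι → M}
    (hf : LinearIndependent R fun i : {i // p i} => f i) {y : ι → R}
    (hy : ∀ i, ¬ p i → y i = 0) (hsum : ∑ i, y i • f i = 0) : y = 0 := by
  have hsub : ∑ i : {i // p i}, y i • f i = 0 := by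
    rw [← hsum, ← Fintype.sum_subtype_add_sum_subtype p, Fintype.sum_eq_zero
      (fun i : {i // ¬ p i} => y i • f i) (fun i => by simp [hy i i.2]), add_zero]
  funext i
  by_cases hi : p i
  · exact Fintype.linearIndependent_iff.1 hf (fun i => y i) hsub ⟨i, hi⟩
  · exact hy i hi

theorem ContinuousLinearMap.span_eq_top_of_ne_zero {𝕜 E : Type*} [NontriviallyNormedField 𝕜]
    [CompleteSpace 𝕜] [AddCommGroup E] [Module 𝕜 E] [TopologicalSpace E] [IsTopologicalAddGroup E]
    [ContinuousSMul 𝕜 E] [T2Space E] [FiniteDimensional 𝕜 E] {s : Set (E →L[𝕜] 𝕜)}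
    (h : ∀ z ≠ 0, ∃ f ∈ s, f z ≠ 0) : Submodule.span 𝕜 s = ⊤ := by
  have hs : Submodule.span 𝕜 (LinearMap.toContinuousLinearMap.symm '' s) = ⊤ :=
    Submodule.span_eq_top_of_ne_zero fun z hz => by
      obtain ⟨f, hf, hfz⟩ := h z hz
      exact ⟨_, Set.mem_image_of_mem _ hf, hfz⟩
  have := congrArg (Submodule.map LinearMap.toContinuousLinearMap.toLinearMap) hs
  rw [Submodule.map_span, Set.image_image, Submodule.map_top, LinearEquiv.range] at this
  simpa only [LinearEquiv.coe_coe, LinearEquiv.apply_symm_apply, Set.image_id'] using this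

section GaleDual

variable {ι W : Type*} [Fintype ι] [AddCommGroup W] [Module ℝ W] [TopologicalSpace W]
  (a : ι → W →L[ℝ] ℝ) (V : Submodule ℝ (ι → ℝ)) (hV : ∀ y : ι → ℝ, y ∈ V ↔ ∑ i, y i • a i = 0)
  (γ : ι → V →L[ℝ] ℝ) (hγ : ∀ (i : ι) (v : V), γ i v = (v : ι → ℝ) i)
include hV hγ

theorem exists_apply_add_eq_of_sum_smul_eq (b c : ι → ℝ) (h : ∑ i, c i • γ i = ∑ i, b i • γ i) :
    ∃ w : W, ∀ i, a i w + b i = c i := by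
  obtain ⟨w, hw⟩ := LinearMap.mem_range_of_forall_dotProduct_eq_zero
    (T := LinearMap.pi fun i => (a i : W →ₗ[ℝ] ℝ)) (c := c - b) fun y hy => by
      have hyV : y ∈ V := (hV y).2 <| ContinuousLinearMap.ext fun w => by
        simpa [dotProduct] using hy w
      have := congrArg (fun f : V →L[ℝ] ℝ => f ⟨y, hyV⟩) h
      simp only [sum_apply, smul_apply, hγ, smul_eq_mul] at this
      simp [dotProduct, mul_sub, Finset.sum_sub_distrib, mul_comm, this]
  exact ⟨w, fun i => by simpa [eq_sub_iff_add_eq] using congrFun hw i⟩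

theorem span_image_compl_eq_top_of_linearIndependent {Z : Set ι}
    (hZ : LinearIndependent ℝ fun i : Z => a i) : Submodule.span ℝ (γ '' Zᶜ) = ⊤ := by
  classical
  refine ContinuousLinearMap.span_eq_top_of_ne_zero fun v hv => ?_
  by_contra! hγv
  refine hv (Subtype.ext <| hZ.eq_zero_of_sum_smul_eq_zero (p := (· ∈ Z)) (fun i hi => ?_) ?_)
  · rw [← hγ]
    exact hγv _ ⟨i, hi, rfl⟩
  · exact (hV v).1 v.2

end GaleDual

theorem stmt11_general {W : Type*} [NormedAddCommGroup W] [NormedSpace ℝ W]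
    {m : ℕ} (a : Fin m → (W →L[ℝ] ℝ))
    (b : Fin m → ℝ)
    (hgen : ∀ w ∈ {w : W | ∀ i, 0 ≤ a i w + b i},
      LinearIndependent ℝ (fun i : {i : Fin m // a i w + b i = 0} => a i.1))
    (V : Submodule ℝ (Fin m → ℝ))
    (hV : ∀ y : Fin m → ℝ, y ∈ V ↔ ∑ i, y i • a i = 0)
    (γ : Fin m → (V →L[ℝ] ℝ))
    (hγ : ∀ (i : Fin m) (v : V), γ i v = (v : Fin m → ℝ) i)
    (x : Fin m → ℝ)
    (hx : ∑ i, x i ^ 2 • γ i = ∑ i, b i • γ i) :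
    {i | x i = 0} ∈ {I : Set (Fin m) |
        ∃ w : W, (∀ j, 0 ≤ a j w + b j) ∧ ∀ i ∈ I, a i w + b i = 0} ∧
      Submodule.span ℝ (γ '' {i | x i ≠ 0}) = ⊤ := by
  obtain ⟨w, hw⟩ := exists_apply_add_eq_of_sum_smul_eq a V hV γ hγ b _ hx
  have hwP : ∀ j, 0 ≤ a j w + b j := fun j => hw j ▸ sq_nonneg (x j)
  have hzero : {i | a i w + b i = 0} = {i | x i = 0} := by
    ext i
    simp [hw i]
  refine ⟨⟨w, hwP, fun i hi => hzero.ge hi⟩, ?_⟩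
  have hspan := span_image_compl_eq_top_of_linearIndependent a V hV γ hγ
    (Z := {i | a i w + b i = 0}) (hgen w hwP)
  rwa [hzero, Set.compl_ofPred] at hspan

/-- If the polyhedron
`P = {w : a i w + b i ≥ 0, i = 1,…,m}` is generic, then every `x ∈ ℝ^m` with
`μ(x) = Σ x i ^ 2 • γ i = δ` has zero set `{i : x i = 0}` belonging to `K_P`
(so `μ⁻¹(δ) ⊆ U(K_P)`) and the set `{γ i : x i ≠ 0}` spans `V*`
(so `δ` is a regular value of `μ`). -/
theorem stmt11 {W : Type*} [NormedAddCommGroup W] [NormedSpace ℝ W]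
    [FiniteDimensional ℝ W] {m : ℕ} (a : Fin m → (W →L[ℝ] ℝ))
    (hspan : Submodule.span ℝ (Set.range a) = ⊤) (b : Fin m → ℝ)
    (hPne : {w : W | ∀ i, 0 ≤ a i w + b i}.Nonempty)
    (hgen : ∀ w ∈ {w : W | ∀ i, 0 ≤ a i w + b i},
      LinearIndependent ℝ (fun i : {i : Fin m // a i w + b i = 0} => a i.1))
    (V : Submodule ℝ (Fin m → ℝ))
    (hV : ∀ y : Fin m → ℝ, y ∈ V ↔ ∑ i, y i • a i = 0)
    (γ : Fin m → (V →L[ℝ] ℝ))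
    (hγ : ∀ (i : Fin m) (v : V), γ i v = (v : Fin m → ℝ) i)
    (x : Fin m → ℝ)
    (hx : ∑ i, x i ^ 2 • γ i = ∑ i, b i • γ i) :
    {i | x i = 0} ∈ {I : Set (Fin m) |
        ∃ w : W, (∀ j, 0 ≤ a j w + b j) ∧ ∀ i ∈ I, a i w + b i = 0} ∧
      Submodule.span ℝ (γ '' {i | x i ≠ 0}) = ⊤ :=
  stmt11_general a b hgen V hV γ hγ x hx
end

section
/- Let V be a finite-dimensional real vector space, γ₁,…,γ_m ∈ V*, and x = (x₁,…,x_m) ∈ ℝ^m such that the set {γ_i : x_i ≠ 0} spans V*. Define L : V → V* by L(v) = Σ_{i=1}^m e^{2γ_i(v)} x_i² γ_i. Then L is injective and its range equals relint(cone{γ_i : x_i ≠ 0}). -/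
/-!
With `a i = x i ^ 2`, the map `L` is the gradient of the convex potential
`Φ v = Σ a i / 2 * exp (2 * γ i v)`. Injectivity: `(L u - L v) (u - v)` is a sum of the nonnegative
terms `a i (e^{2 γ i u} - e^{2 γ i v}) (γ i u - γ i v)`, so `L u = L v` forces `γ i u = γ i v`
whenever `a i > 0`, and these `γ i` span the dual. Range: the values of `L` are combinations of the
`γ i` with positive coefficients, which are interior points of the cone; the cone is therefore
full-dimensional and its intrinsic interior is its interior. Conversely an interior point `w` is
`Σ c i • γ i` with `c i ≥ ε a i` for some `ε > 0`, which makes `Φ - w` coercive, and at a minimiser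
`v` of `Φ - w` we get `L v = w`.
-/

open Filter Set Real

theorem exists_pos_sub_smul_mem_of_mem_interior {E : Type*} [AddCommGroup E] [TopologicalSpace E]
    [IsTopologicalAddGroup E] [Module ℝ E] [ContinuousSMul ℝ E] {s : Set E} {w : E}
    (hw : w ∈ interior s) (u : E) : ∃ ε : ℝ, 0 < ε ∧ w - ε • u ∈ s := by
  have hlim : Tendsto (fun ε : ℝ => w - ε • u) (nhdsWithin 0 (Ioi 0)) (nhds w) := by
    have : Continuous fun ε : ℝ => w - ε • u := by fun_prop
    simpa using (this.tendsto 0).mono_left nhdsWithin_le_nhds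
  obtain ⟨ε, hε_mem, hε⟩ := ((hlim.eventually (mem_interior_iff_mem_nhds.1 hw)).and
    (self_mem_nhdsWithin : Ioi (0 : ℝ) ∈ nhdsWithin 0 (Ioi 0))).exists
  exact ⟨ε, hε, hε_mem⟩

theorem intrinsicInterior_eq_interior_of_nonempty_interior {E : Type*} [NormedAddCommGroup E]
    [NormedSpace ℝ E] {s : Set E} (hs : (interior s).Nonempty) :
    intrinsicInterior ℝ s = interior s := by
  have hspan : affineSpan ℝ s = ⊤ :=
    top_unique <| isOpen_interior.affineSpan_eq_top hs ▸ affineSpan_mono ℝ interior_subset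
  refine Subset.antisymm ?_ interior_subset_intrinsicInterior
  rintro _ ⟨y, hy, rfl⟩
  have hopen : IsOpen (affineSpan ℝ s : Set E) := by rw [hspan]; exact isOpen_univ
  refine interior_maximal ?_ (hopen.isOpenMap_subtype_val _ isOpen_interior) ⟨y, hy, rfl⟩
  rintro _ ⟨z, hz, rfl⟩
  exact mem_preimage.1 (interior_subset hz)

theorem sum_smul_mem_interior_coneOf {E : Type*} [NormedAddCommGroup E] [NormedSpace ℝ E]
    [FiniteDimensional ℝ E] {m : ℕ} {v : Fin m → E} {I : Set (Fin m)}
    (hspan : Submodule.span ℝ (v '' I) = ⊤) {c : Fin m → ℝ} (hc_pos : ∀ i ∈ I, 0 < c i)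
    (hc_zero : ∀ i ∉ I, c i = 0) :
    ∑ i, c i • v i ∈ interior (coneOf v I) := by
  classical
  let T := Fintype.linearCombination ℝ (I.indicator v)
  have hT : ∀ d, T d = ∑ i, I.indicator d i • v i := fun d => by
    simp only [T, Fintype.linearCombination_apply, ← indicator_smul_apply]
    exact Finset.sum_congr rfl fun i _ => by by_cases hi : i ∈ I <;> simp [hi]
  have hT_surj : Function.Surjective T := by
    rw [← LinearMap.range_eq_top, Fintype.range_linearCombination, eq_top_iff, ← hspan]
    refine Submodule.span_mono ?_
    rintro _ ⟨i, hi, rfl⟩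
    exact ⟨i, indicator_of_mem hi v⟩
  have hU : IsOpen (univ.pi fun _ => Ioi 0 : Set (Fin m → ℝ)) :=
    isOpen_set_pi finite_univ fun _ _ => isOpen_Ioi
  refine interior_maximal ?_ (T.isOpenMap_of_finiteDimensional hT_surj _ hU)
    ⟨fun i => if i ∈ I then c i else 1, fun i _ => ?_, ?_⟩
  · rintro _ ⟨d, hd, rfl⟩
    refine ⟨I.indicator d, fun i => ?_, fun i hi => indicator_of_notMem hi d, hT d⟩
    exact indicator_nonneg (fun i _ => (hd i (mem_univ i)).le) i
  · by_cases hi : i ∈ I <;> simp [hi, hc_pos]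
  · rw [hT]
    exact Finset.sum_congr rfl fun i _ => by by_cases hi : i ∈ I <;> simp [hi, hc_zero]

section Functionals

variable {V : Type*} [NormedAddCommGroup V] [NormedSpace ℝ V] {ι : Type*}

theorem eq_zero_of_span_eq_top_of_forall_apply_eq_zero {γ : ι → V →L[ℝ] ℝ} {I : Set ι}
    (hspan : Submodule.span ℝ (γ '' I) = ⊤) {v : V} (hv : ∀ i ∈ I, γ i v = 0) : v = 0 := by
  have hker : Submodule.span ℝ (γ '' I) ≤
      LinearMap.ker (ContinuousLinearMap.apply ℝ ℝ v : (V →L[ℝ] ℝ) →ₗ[ℝ] ℝ) :=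
    Submodule.span_le.2 <| by rintro _ ⟨i, hi, rfl⟩; exact hv i hi
  exact SeparatingDual.eq_zero_of_forall_dual_eq_zero fun f => hker (hspan ▸ Submodule.mem_top)

theorem tendsto_sum_abs_apply_cocompact [FiniteDimensional ℝ V] [Fintype ι]
    (ℓ : ι → V →L[ℝ] ℝ) (hℓ : ∀ v, (∀ i, ℓ i v = 0) → v = 0) :
    Tendsto (fun v => ∑ i, |ℓ i v|) (cocompact V) atTop := by
  let Φ : V →L[ℝ] ι → ℝ := ContinuousLinearMap.pi ℓ
  have hΦ : Function.Injective Φ :=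
    (injective_iff_map_eq_zero Φ).2 fun v hv => hℓ v fun i => congr_fun hv i
  obtain ⟨K, -, hK⟩ := (Φ : V →ₗ[ℝ] ι → ℝ).injective_iff_antilipschitz.1 hΦ
  have hnorm : Tendsto (fun v => ‖Φ v‖) (cocompact V) atTop := by
    rw [← Metric.cobounded_eq_cocompact]
    exact tendsto_norm_cobounded_atTop.comp hK.tendsto_cobounded
  refine tendsto_atTop_mono (fun v => ?_) hnorm
  refine (pi_norm_le_iff_of_nonneg (by positivity)).2 fun j => ?_
  exact (Real.norm_eq_abs _).trans_le <|
    Finset.single_le_sum (f := fun i => |ℓ i v|) (fun i _ => abs_nonneg _) (Finset.mem_univ j)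

end Functionals

theorem exists_mul_abs_sub_le_mul_exp_sub_mul {a c d : ℝ} (ha : 0 ≤ a) (hd : 0 ≤ d)
    (hdc : d ≤ c) (hac : a = 0 → c = 0) :
    ∃ β, ∀ t : ℝ, d * |t| - β ≤ a * exp (2 * t) - c * t := by
  rcases ha.eq_or_lt with rfl | ha
  · obtain rfl := hac rfl
    obtain rfl : d = 0 := le_antisymm hdc hd
    exact ⟨0, fun t => by simp⟩
  -- for `t ≥ 0` use `exp (2 * t) ≥ 2 * t ^ 2` and complete the square in `2 a t² - (c + d) t`
  refine ⟨(c + d) ^ 2 / (8 * a), fun t => ?_⟩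
  have hβ : 0 ≤ (c + d) ^ 2 / (8 * a) := by positivity
  rcases le_total t 0 with ht | ht
  · rw [abs_of_nonpos ht]
    nlinarith [mul_pos ha (exp_pos (2 * t)), mul_nonneg (sub_nonneg.2 hdc) (neg_nonneg.2 ht)]
  · rw [abs_of_nonneg ht]
    have hexp : 2 * t ^ 2 ≤ exp (2 * t) := by
      nlinarith [quadratic_le_exp_of_nonneg (by linarith : 0 ≤ 2 * t)]
    have hsq : 0 ≤ 2 * a * t ^ 2 - (c + d) * t + (c + d) ^ 2 / (8 * a) := by
      have : 2 * a * t ^ 2 - (c + d) * t + (c + d) ^ 2 / (8 * a) =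
          (4 * a * t - (c + d)) ^ 2 / (8 * a) := by
        field_simp
        ring
      rw [this]
      positivity
    nlinarith [mul_le_mul_of_nonneg_left hexp ha.le]

theorem exp_two_mul_sub_mul_sub_pos {s t : ℝ} (h : s ≠ t) :
    0 < (exp (2 * s) - exp (2 * t)) * (s - t) := by
  rcases h.lt_or_gt with h | h
  · exact mul_pos_of_neg_of_neg (sub_neg.2 (exp_lt_exp.2 (by linarith))) (sub_neg.2 h)
  · exact mul_pos (sub_pos.2 (exp_lt_exp.2 (by linarith))) (sub_pos.2 h)

theorem exp_two_mul_sub_mul_sub_nonneg (s t : ℝ) :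
    0 ≤ (exp (2 * s) - exp (2 * t)) * (s - t) := by
  rcases eq_or_ne s t with rfl | h
  · simp
  · exact (exp_two_mul_sub_mul_sub_pos h).le

section Legendre

variable {V : Type*} [NormedAddCommGroup V] [NormedSpace ℝ V] {ι : Type*} [Fintype ι]

noncomputable def legendreMap (γ : ι → V →L[ℝ] ℝ) (a : ι → ℝ) (v : V) : V →L[ℝ] ℝ :=
  ∑ i, (exp (2 * γ i v) * a i) • γ i

noncomputable def legendrePotential (γ : ι → V →L[ℝ] ℝ) (a : ι → ℝ) (v : V) : ℝ :=
  ∑ i, a i / 2 * exp (2 * γ i v)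

theorem hasFDerivAt_legendrePotential (γ : ι → V →L[ℝ] ℝ) (a : ι → ℝ) (v : V) :
    HasFDerivAt (legendrePotential γ a) (legendreMap γ a v) v := by
  refine HasFDerivAt.fun_sum fun i _ => ?_
  refine ((((γ i).hasFDerivAt.const_mul 2).exp).const_mul (a i / 2)).congr_fderiv ?_
  rw [smul_smul, smul_smul]
  congr 1
  ring

theorem legendreMap_sub_apply_sub (γ : ι → V →L[ℝ] ℝ) (a : ι → ℝ) (u v : V) :
    (legendreMap γ a u - legendreMap γ a v) (u - v) =
      ∑ i, a i * ((exp (2 * γ i u) - exp (2 * γ i v)) * (γ i u - γ i v)) := by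
  simp only [legendreMap, sub_apply, sum_apply,
    smul_apply, smul_eq_mul, map_sub, ← Finset.sum_sub_distrib]
  exact Finset.sum_congr rfl fun i _ => by ring

theorem legendreMap_injective {γ : ι → V →L[ℝ] ℝ} {a : ι → ℝ} {I : Set ι}
    (hspan : Submodule.span ℝ (γ '' I) = ⊤) (ha : 0 ≤ a) (ha_pos : ∀ i ∈ I, 0 < a i) :
    Function.Injective (legendreMap γ a) := by
  intro u v huv
  have hsum := legendreMap_sub_apply_sub γ a u v
  rw [huv, sub_self, zero_apply, eq_comm,
    Finset.sum_eq_zero_iff_of_nonneg fun i _ =>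
      mul_nonneg (ha i) (exp_two_mul_sub_mul_sub_nonneg _ _)] at hsum
  rw [← sub_eq_zero]
  refine eq_zero_of_span_eq_top_of_forall_apply_eq_zero hspan fun i hi => ?_
  by_contra hne
  rw [map_sub, sub_eq_zero] at hne
  exact (mul_pos (ha_pos i hi) (exp_two_mul_sub_mul_sub_pos hne)).ne' (hsum i (Finset.mem_univ i))

variable [FiniteDimensional ℝ V] {γ : ι → V →L[ℝ] ℝ} {a : ι → ℝ} {I : Set ι}

theorem tendsto_legendrePotential_sub_cocompact (hspan : Submodule.span ℝ (γ '' I) = ⊤)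
    (ha : 0 ≤ a) (ha_pos : ∀ i ∈ I, 0 < a i) {c : ι → ℝ} {ε : ℝ} (hε : 0 < ε)
    (hc : ∀ i, ε * a i ≤ c i) (hc_zero : ∀ i ∉ I, c i = 0) :
    Tendsto (fun v => legendrePotential γ a v - ∑ i, c i * γ i v) (cocompact V) atTop := by
  choose β hβ using fun i => exists_mul_abs_sub_le_mul_exp_sub_mul (div_nonneg (ha i) zero_le_two)
    (mul_nonneg hε.le (ha i)) (hc i) fun h =>
      hc_zero i fun hi => by linarith [ha_pos i hi]
  have hker : ∀ v, (∀ i, (a i • γ i) v = 0) → v = 0 := fun v hv =>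
    eq_zero_of_span_eq_top_of_forall_apply_eq_zero hspan fun i hi =>
      (mul_eq_zero.1 (hv i)).resolve_left (ha_pos i hi).ne'
  have hlower : ∀ v, ε * ∑ i, |(a i • γ i) v| - ∑ i, β i ≤
      legendrePotential γ a v - ∑ i, c i * γ i v := fun v =>
    calc ε * ∑ i, |(a i • γ i) v| - ∑ i, β i = ∑ i, (ε * a i * |γ i v| - β i) := by
          simp only [smul_apply, smul_eq_mul, abs_mul, abs_of_nonneg (ha _), Finset.mul_sum,
            ← Finset.sum_sub_distrib, mul_assoc]
      _ ≤ ∑ i, (a i / 2 * exp (2 * γ i v) - c i * γ i v) :=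
          Finset.sum_le_sum fun i _ => hβ i (γ i v)
      _ = legendrePotential γ a v - ∑ i, c i * γ i v := Finset.sum_sub_distrib ..
  refine tendsto_atTop_mono hlower (tendsto_atTop_add_const_right _ _ ?_)
  exact (tendsto_sum_abs_apply_cocompact _ hker).const_mul_atTop hε

theorem exists_legendreMap_eq (hspan : Submodule.span ℝ (γ '' I) = ⊤)
    (ha : 0 ≤ a) (ha_pos : ∀ i ∈ I, 0 < a i) {c : ι → ℝ} {ε : ℝ} (hε : 0 < ε)
    (hc : ∀ i, ε * a i ≤ c i) (hc_zero : ∀ i ∉ I, c i = 0) :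
    ∃ v, legendreMap γ a v = ∑ i, c i • γ i := by
  have hderiv : ∀ v, HasFDerivAt (fun v => legendrePotential γ a v - ∑ i, c i * γ i v)
      (legendreMap γ a v - ∑ i, c i • γ i) v := fun v =>
    (hasFDerivAt_legendrePotential γ a v).sub
      (HasFDerivAt.fun_sum fun i _ => (γ i).hasFDerivAt.const_mul (c i))
  obtain ⟨v, hv⟩ := Continuous.exists_forall_le
    (continuous_iff_continuousAt.2 fun v => (hderiv v).continuousAt)
    (tendsto_legendrePotential_sub_cocompact hspan ha ha_pos hε hc hc_zero)
  have hmin : IsLocalMin (fun v => legendrePotential γ a v - ∑ i, c i * γ i v) v :=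
    Eventually.of_forall hv
  exact ⟨v, sub_eq_zero.1 (hmin.hasFDerivAt_eq_zero (hderiv v))⟩

end Legendre




theorem range_legendreMap {V : Type*} [NormedAddCommGroup V] [NormedSpace ℝ V]
    [FiniteDimensional ℝ V] {m : ℕ} {γ : Fin m → V →L[ℝ] ℝ} {a : Fin m → ℝ} {I : Set (Fin m)}
    (hspan : Submodule.span ℝ (γ '' I) = ⊤) (ha_pos : ∀ i ∈ I, 0 < a i)
    (ha_zero : ∀ i ∉ I, a i = 0) :
    range (legendreMap γ a) = interior (coneOf γ I) := by
  have ha : 0 ≤ a := fun i => by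
    by_cases hi : i ∈ I
    exacts [(ha_pos i hi).le, (ha_zero i hi).ge]
  refine Subset.antisymm ?_ fun w hw => ?_
  · rintro _ ⟨v, rfl⟩
    exact sum_smul_mem_interior_coneOf hspan (fun i hi => mul_pos (exp_pos _) (ha_pos i hi))
      fun i hi => by simp [ha_zero i hi]
  -- `legendreMap γ a 0 = ∑ i, a i • γ i`, so `w = ∑ i, (d i + ε * a i) • γ i`
  obtain ⟨ε, hε, d, hd_nonneg, hd_zero, hd⟩ :=
    exists_pos_sub_smul_mem_of_mem_interior hw (legendreMap γ a 0)
  obtain ⟨v, hv⟩ := exists_legendreMap_eq hspan ha ha_pos (c := fun i => d i + ε * a i) hε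
    (fun i => le_add_of_nonneg_left (hd_nonneg i)) fun i hi => by simp [hd_zero i hi, ha_zero i hi]
  refine ⟨v, hv.trans ?_⟩
  rw [sub_eq_iff_eq_add] at hd
  simp only [hd, legendreMap, add_smul, Finset.sum_add_distrib, Finset.smul_sum, mul_smul,
    map_zero, mul_zero, exp_zero, one_mul]

/-- If `{γ i : x i ≠ 0}` spans `V*`, then the Legendre-type
map `L(v) = Σ e^{2 γ i (v)} x i ² • γ i` is injective and its range is the
relative interior of `cone{γ i : x i ≠ 0}`. -/
theorem stmt13 {V : Type*} [NormedAddCommGroup V] [NormedSpace ℝ V]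
    [FiniteDimensional ℝ V] {m : ℕ} (γ : Fin m → (V →L[ℝ] ℝ))
    (x : Fin m → ℝ)
    (hspan : Submodule.span ℝ (γ '' {i | x i ≠ 0}) = ⊤) :
    Function.Injective
        (fun v : V => ∑ i, (Real.exp (2 * γ i v) * x i ^ 2) • γ i) ∧
      Set.range (fun v : V => ∑ i, (Real.exp (2 * γ i v) * x i ^ 2) • γ i) =
        intrinsicInterior ℝ (coneOf γ {i | x i ≠ 0}) := by
  have hx_pos : ∀ i ∈ {i | x i ≠ 0}, 0 < x i ^ 2 := fun i hi => by
    have hi : x i ≠ 0 := hi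
    positivity
  have hx_zero : ∀ i ∉ {i | x i ≠ 0}, x i ^ 2 = 0 := fun i hi => by simp_all
  have hrange := range_legendreMap hspan hx_pos hx_zero
  refine ⟨legendreMap_injective hspan (fun i => sq_nonneg (x i)) hx_pos, ?_⟩
  rw [intrinsicInterior_eq_interior_of_nonempty_interior ⟨_, hrange ▸ mem_range_self 0⟩]
  exact hrange
end

section
/- Let K be a simplicial complex on {1,…,m}. The shear map (ℝ_{>0} × V') × U(K) → U(K) × U(K), ((r, v'), x) ↦ ((r, v') • x, x), is a proper map (the preimage of every compact set is compact) if and only if for every I, J ∈ K the convex hulls conv{γ'_i : i ∉ I} and conv{γ'_j : j ∉ J} have a common point lying in the topological interior of each of them in (V')*. Moreover, when this holds the action of ℝ_{>0} × V' on U(K) is also free. -/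
/-- The shear map `(ℝ_{>0} × V') × U(K) → U(K) × U(K)`,
`((r, v'), x) ↦ ((r, v') • x, x)`, of the action
`(r, v') • x = (r e^{γ'₁(v')} x₁, …, r e^{γ'_m(v')} x_m)`. -/
noncomputable def shearPos {V' : Type*} [NormedAddCommGroup V'] [NormedSpace ℝ V']
    {m : ℕ} (γ' : Fin m → (V' →L[ℝ] ℝ)) (K : Set (Set (Fin m))) :
    ({r : ℝ // 0 < r} × V') × UK K → UK K × UK K := fun p =>
  (⟨fun i => p.1.1.1 * Real.exp (γ' i p.1.2) * p.2.1 i, by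
      have h : {i | p.1.1.1 * Real.exp (γ' i p.1.2) * p.2.1 i = 0} =
          {i | p.2.1 i = 0} := by
        ext i
        simp [mul_eq_zero, Real.exp_ne_zero, p.1.1.2.ne']
      show {i | p.1.1.1 * Real.exp (γ' i p.1.2) * p.2.1 i = 0} ∈ K
      rw [h]
      exact p.2.2⟩, p.2)

/-!
Write `r = exp s`. Then `(s, v')` scales `x i` by `exp (ℓ i (s, v'))`, where `ℓ i = (1, γ' i)`
is a linear functional on `ℝ × V'`, and the question becomes one about the action of
`E = ℝ × V'` on `U(K)` with weights `ℓ i`.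

The obstruction to properness is an escape direction: a nonzero `g` such that
`{i | ℓ i g > 0}` and `{i | ℓ i g < 0}` lie in faces of `K`. Along `n • g`, suitable points
converge together with their translates, so the shear is not proper. Conversely, if the group
coordinates of a compact preimage were unbounded, normalising them would give such a direction:
coordinates with `ℓ i g > 0` must vanish in the limit of the points, and those with `ℓ i g < 0`
in the limit of their translates.

For `g = (-c, v')` the escape condition says that the affine functional `w ↦ w v' - c` on
`(V')*` is `≤ 0` on `{γ' i | i ∉ I}` and `≥ 0` on `{γ' j | j ∉ J}`. A common interior point of
the two convex hulls forces such a functional to vanish. Conversely, if the interiors are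
disjoint, Hahn–Banach separates the hulls when both interiors are nonempty; otherwise one hull
lies in an affine hyperplane, which gives an escape direction with `J = I`. Finally, a nontrivial
stabiliser of `x` is an escape direction with `I = J = {i | x i = 0}`, whence freeness.
-/

open Real Set Filter Topology

section ConvexGeometry

variable {W : Type*} [NormedAddCommGroup W] [NormedSpace ℝ W]

theorem eq_zero_of_forall_le_of_forall_ge {A B : Set W}
    (hAB : (interior (convexHull ℝ A) ∩ interior (convexHull ℝ B)).Nonempty)
    {f : W →L[ℝ] ℝ} {c : ℝ} (hA : ∀ a ∈ A, f a ≤ c) (hB : ∀ b ∈ B, c ≤ f b) :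
    f = 0 ∧ c = 0 := by
  obtain ⟨p, hp⟩ := hAB
  have hA' : convexHull ℝ A ⊆ {w | f w ≤ c} :=
    convexHull_min hA (convex_halfSpace_le f.toLinearMap.isLinear c)
  have hB' : convexHull ℝ B ⊆ {w | c ≤ f w} :=
    convexHull_min hB (convex_halfSpace_ge f.toLinearMap.isLinear c)
  -- `f` is constant near `p`, so its derivative `f` itself vanishes.
  have hloc : (f : W → ℝ) =ᶠ[𝓝 p] fun _ => c := by
    filter_upwards [(isOpen_interior.inter isOpen_interior).mem_nhds hp] with w hw
    exact le_antisymm (hA' (interior_subset hw.1)) (hB' (interior_subset hw.2))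
  have hf : f = 0 :=
    f.hasFDerivAt.unique ((hasFDerivAt_const c p).congr_of_eventuallyEq hloc)
  refine ⟨hf, ?_⟩
  simpa [hf] using hloc.eq_of_nhds.symm

theorem subset_closure_interior_convexHull {A : Set W}
    (hA : (interior (convexHull ℝ A)).Nonempty) : A ⊆ closure (interior (convexHull ℝ A)) := by
  rw [(convex_convexHull ℝ A).closure_interior_eq_closure_of_nonempty_interior hA]
  exact (subset_convexHull ℝ A).trans subset_closure

theorem exists_separating_of_disjoint_interior_convexHull {A B : Set W}
    (hA : (interior (convexHull ℝ A)).Nonempty) (hB : (interior (convexHull ℝ B)).Nonempty)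
    (hAB : Disjoint (interior (convexHull ℝ A)) (interior (convexHull ℝ B))) :
    ∃ (f : W →L[ℝ] ℝ) (c : ℝ), f ≠ 0 ∧ (∀ a ∈ A, f a ≤ c) ∧ ∀ b ∈ B, c ≤ f b := by
  obtain ⟨f, c, hfA, hfB⟩ := geometric_hahn_banach_open_open
    (convex_convexHull ℝ A).interior isOpen_interior (convex_convexHull ℝ B).interior
    isOpen_interior hAB
  refine ⟨f, c, ?_, fun a ha => ?_, fun b hb => ?_⟩
  · rintro rfl
    obtain ⟨a, ha⟩ := hA
    obtain ⟨b, hb⟩ := hB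
    exact lt_irrefl (0 : ℝ) ((hfA a ha).trans (hfB b hb))
  · exact closure_lt_subset_le f.continuous continuous_const
      (closure_mono (fun w hw => hfA w hw) (subset_closure_interior_convexHull hA ha))
  · exact closure_lt_subset_le continuous_const f.continuous
      (closure_mono (fun w hw => hfB w hw) (subset_closure_interior_convexHull hB hb))

theorem exists_forall_eq_of_interior_convexHull_eq_empty [FiniteDimensional ℝ W] {A : Set W}
    (hA : interior (convexHull ℝ A) = ∅) :
    ∃ (f : W →L[ℝ] ℝ) (c : ℝ), (f ≠ 0 ∨ c ≠ 0) ∧ ∀ a ∈ A, f a = c := by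
  rcases A.eq_empty_or_nonempty with rfl | ⟨a₀, ha₀⟩
  · exact ⟨0, 1, Or.inr one_ne_zero, by simp⟩
  have hspan : vectorSpan ℝ A < ⊤ := by
    refine lt_top_iff_ne_top.2 fun htop => ?_
    rw [← AffineSubspace.affineSpan_eq_top_iff_vectorSpan_eq_top_of_nonempty ℝ W W ⟨a₀, ha₀⟩,
      ← affineSpan_convexHull,
      ← (convex_convexHull ℝ A).interior_nonempty_iff_affineSpan_eq_top, hA] at htop
    exact not_nonempty_empty htop
  obtain ⟨f, hf, hfA⟩ := Submodule.exists_dual_map_eq_bot_of_lt_top hspan inferInstance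
  refine ⟨LinearMap.toContinuousLinearMap f, f a₀, Or.inl (by simpa using hf), fun a ha => ?_⟩
  have hmem : f (a -ᵥ a₀) ∈ (vectorSpan ℝ A).map f :=
    Submodule.mem_map_of_mem (vsub_mem_vectorSpan ℝ ha ha₀)
  rw [hfA, Submodule.mem_bot, vsub_eq_sub, map_sub, sub_eq_zero] at hmem
  exact hmem

theorem NormedSpace.inclusionInDoubleDual_surjective [FiniteDimensional ℝ W] :
    Function.Surjective (NormedSpace.inclusionInDoubleDual ℝ W) := by
  intro f
  let e : Module.Dual ℝ W ≃ₗ[ℝ] StrongDual ℝ W := LinearMap.toContinuousLinearMap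
  refine ⟨(Module.evalEquiv ℝ W).symm (f.toLinearMap ∘ₗ e.toLinearMap), ?_⟩
  ext w
  exact (Module.apply_evalEquiv_symm_apply ℝ W (e.symm w) _).trans
    (congrArg f (e.apply_symm_apply w))

end ConvexGeometry

theorem nonpos_of_tendsto_exp_mul {t L x : ℕ → ℝ} {b x₀ y₀ : ℝ}
    (ht : Tendsto t atTop atTop) (hL : Tendsto (fun n => L n / t n) atTop (𝓝 b))
    (hx : Tendsto x atTop (𝓝 x₀)) (hx₀ : x₀ ≠ 0)
    (hy : Tendsto (fun n => exp (L n) * x n) atTop (𝓝 y₀)) : b ≤ 0 := by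
  have hexp : Tendsto (fun n => exp (L n)) atTop (𝓝 (y₀ / x₀)) := by
    refine (hy.div hx hx₀).congr' ?_
    filter_upwards [hx.eventually_ne hx₀] with n hn
    exact mul_div_cancel_right₀ _ hn
  have hbdd : ∀ᶠ n in atTop, L n ≤ log (y₀ / x₀ + 1) := by
    filter_upwards [hexp.eventually_lt_const (lt_add_one _)] with n hn
    rw [← log_exp (L n)]
    exact log_le_log (exp_pos _) hn.le
  refine le_of_tendsto_of_tendsto hL
    ((tendsto_const_nhds (x := log (y₀ / x₀ + 1))).div_atTop ht) ?_
  filter_upwards [hbdd, ht.eventually_gt_atTop 0] with n hn htn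
  exact div_le_div_of_nonneg_right hn htn.le

theorem tendsto_exp_neg_mul_max (a : ℝ) :
    Tendsto (fun n : ℕ => exp (-(n * max a 0))) atTop (𝓝 (if 0 < a then 0 else 1)) := by
  split_ifs with ha
  · rw [max_eq_left ha.le]
    exact tendsto_exp_atBot.comp
      (tendsto_neg_atTop_atBot.comp (tendsto_natCast_atTop_atTop.atTop_mul_const ha))
  · simp [max_eq_right (not_lt.1 ha)]

section ExpAction

variable {E : Type*} [NormedAddCommGroup E] [NormedSpace ℝ E] {m : ℕ}
  (ℓ : Fin m → E →L[ℝ] ℝ) (K : Set (Set (Fin m)))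

noncomputable def expAction (g : E) (x : Fin m → ℝ) : Fin m → ℝ :=
  fun i => exp (ℓ i g) * x i

theorem setOf_expAction_eq_zero (g : E) (x : Fin m → ℝ) :
    {i | expAction ℓ g x i = 0} = {i | x i = 0} := by
  simp [expAction, exp_ne_zero]

noncomputable def expShear (p : E × UK K) : UK K × UK K :=
  (⟨expAction ℓ p.1 p.2, by rw [setOf_expAction_eq_zero]; exact p.2.2⟩, p.2)

theorem continuous_expShear : Continuous (expShear ℓ K) := by
  refine .prodMk (.subtype_mk (continuous_pi fun i => ?_) _) continuous_snd
  exact (continuous_exp.comp ((ℓ i).continuous.comp continuous_fst)).mul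
    ((continuous_apply i).comp (continuous_subtype_val.comp continuous_snd))

def IsEscapeDirection (g : E) : Prop :=
  g ≠ 0 ∧ (∃ I ∈ K, {i | 0 < ℓ i g} ⊆ I) ∧ ∃ J ∈ K, {i | ℓ i g < 0} ⊆ J

variable {ℓ K}

theorem not_isCompact_preimage_expShear (hKdown : ∀ I ∈ K, ∀ J ⊆ I, J ∈ K) {g : E}
    (hg : IsEscapeDirection ℓ K g) :
    ∃ C : Set (UK K × UK K), IsCompact C ∧ ¬ IsCompact (expShear ℓ K ⁻¹' C) := by
  obtain ⟨hg0, ⟨I, hI, hIpos⟩, J, hJ, hJneg⟩ := hg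
  have hlim_mem : ∀ (b : Fin m → ℝ) (F : Set (Fin m)), F ∈ K → {i | 0 < b i} ⊆ F →
      {i | (if 0 < b i then (0 : ℝ) else 1) = 0} ∈ K := fun b F hF hb =>
    hKdown F hF _ (by simpa using hb)
  let x : ℕ → UK K := fun n => ⟨fun i => exp (-(n * max (ℓ i g) 0)),
    by simpa [exp_ne_zero] using hKdown I hI ∅ (empty_subset I)⟩
  let x₀ : UK K := ⟨fun i => if 0 < ℓ i g then 0 else 1, hlim_mem _ I hI hIpos⟩
  let y₀ : UK K := ⟨fun i => if 0 < -ℓ i g then 0 else 1,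
    hlim_mem _ J hJ fun i hi => hJneg (show ℓ i g < 0 from neg_pos.1 hi)⟩
  have hx : Tendsto x atTop (𝓝 x₀) :=
    tendsto_subtype_rng.2 (tendsto_pi_nhds.2 fun i => tendsto_exp_neg_mul_max (ℓ i g))
  have hy : Tendsto (fun n : ℕ => (expShear ℓ K ((n : ℝ) • g, x n)).1) atTop (𝓝 y₀) := by
    refine tendsto_subtype_rng.2 (tendsto_pi_nhds.2 fun i => ?_)
    refine (tendsto_exp_neg_mul_max (-ℓ i g)).congr fun n => ?_
    simp only [expShear, expAction, x, map_smul, smul_eq_mul, ← exp_add]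
    congr 1
    rcases le_total (ℓ i g) 0 with h | h <;> simp [h]
  refine ⟨insert (y₀, x₀) (range fun n : ℕ => expShear ℓ K ((n : ℝ) • g, x n)),
    (hy.prodMk_nhds hx).isCompact_insert_range, fun hcpt => ?_⟩
  obtain ⟨R, hR⟩ := (hcpt.image continuous_fst).isBounded.exists_norm_le
  obtain ⟨n, hn⟩ := exists_nat_gt (R / ‖g‖)
  have hnR := hR _ ⟨((n : ℝ) • g, x n), subset_insert _ _ ⟨n, rfl⟩, rfl⟩
  rw [norm_smul, Real.norm_natCast] at hnR
  rw [div_lt_iff₀ (norm_pos_iff.2 hg0)] at hn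
  linarith

theorem isEscapeDirection_of_tendsto {g : ℕ → E} {x : ℕ → Fin m → ℝ} {x₀ y₀ : Fin m → ℝ}
    {u : E} (hg : Tendsto (fun n => ‖g n‖) atTop atTop)
    (hu : Tendsto (fun n => ‖g n‖⁻¹ • g n) atTop (𝓝 u)) (hu0 : u ≠ 0) (hx : Tendsto x atTop (𝓝 x₀))
    (hy : Tendsto (fun n => expAction ℓ (g n) (x n)) atTop (𝓝 y₀))
    (hx₀ : {i | x₀ i = 0} ∈ K) (hy₀ : {i | y₀ i = 0} ∈ K) : IsEscapeDirection ℓ K u := by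
  have hslope : ∀ i, Tendsto (fun n => ℓ i (g n) / ‖g n‖) atTop (𝓝 (ℓ i u)) := fun i =>
    (((ℓ i).continuous.tendsto u).comp hu).congr fun n => by simp [div_eq_inv_mul]
  refine ⟨hu0, ⟨_, hx₀, fun i hi => ?_⟩, _, hy₀, fun i hi => ?_⟩
  · by_contra hxi
    exact not_le.2 hi (nonpos_of_tendsto_exp_mul hg (hslope i) (tendsto_pi_nhds.1 hx i) hxi
      (tendsto_pi_nhds.1 hy i))
  · by_contra hyi
    have hneg := nonpos_of_tendsto_exp_mul (L := fun n => -ℓ i (g n)) hg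
      (by simpa only [neg_div] using (hslope i).neg) (tendsto_pi_nhds.1 hy i) hyi
      ((tendsto_pi_nhds.1 hx i).congr fun n => by simp [expAction, ← mul_assoc, ← exp_add])
    exact (not_le.2 (neg_pos.2 hi)) hneg

theorem isCompact_preimage_expShear [FiniteDimensional ℝ E]
    (h : ∀ g, ¬ IsEscapeDirection ℓ K g) {C : Set (UK K × UK K)} (hC : IsCompact C) :
    IsCompact (expShear ℓ K ⁻¹' C) := by
  obtain ⟨R, hR⟩ : ∃ R, ∀ p ∈ expShear ℓ K ⁻¹' C, ‖p.1‖ ≤ R := by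
    by_contra! hunb
    choose p hpC hp using fun n : ℕ => hunb n
    have hp0 : ∀ n, (p n).1 ≠ 0 := fun n => norm_pos_iff.1 ((Nat.cast_nonneg n).trans_lt (hp n))
    obtain ⟨⟨⟨y₀, x₀⟩, u⟩, ⟨-, hu⟩, φ, hφ, hlim⟩ :=
      (hC.prod (isCompact_sphere (0 : E) 1)).tendsto_subseq
        (x := fun n => (expShear ℓ K (p n), ‖(p n).1‖⁻¹ • (p n).1))
        fun n => ⟨hpC n, by simp [norm_smul, hp0 n]⟩
    refine h u (isEscapeDirection_of_tendsto (g := fun n => (p (φ n)).1)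
      (x := fun n => (p (φ n)).2) ?_ hlim.snd_nhds (ne_zero_of_mem_sphere one_ne_zero ⟨u, hu⟩)
      ?_ ?_ x₀.2 y₀.2)
    · exact tendsto_atTop_mono (fun n => (hp (φ n)).le)
        (tendsto_natCast_atTop_atTop.comp hφ.tendsto_atTop)
    · exact (continuous_subtype_val.tendsto _).comp hlim.fst_nhds.snd_nhds
    · exact (continuous_subtype_val.tendsto _).comp hlim.fst_nhds.fst_nhds
  refine ((isCompact_closedBall 0 R).prod (hC.image continuous_snd)).of_isClosed_subset
    (hC.isClosed.preimage (continuous_expShear ℓ K)) fun p hp => ⟨?_, _, hp, rfl⟩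
  exact mem_closedBall_zero_iff.2 (hR p hp)

theorem isCompact_preimage_expShear_iff [FiniteDimensional ℝ E]
    (hKdown : ∀ I ∈ K, ∀ J ⊆ I, J ∈ K) :
    (∀ C : Set (UK K × UK K), IsCompact C → IsCompact (expShear ℓ K ⁻¹' C)) ↔
      ∀ g, ¬ IsEscapeDirection ℓ K g := by
  refine ⟨fun hproper g hg => ?_, fun h C hC => isCompact_preimage_expShear h hC⟩
  obtain ⟨C, hC, hnC⟩ := not_isCompact_preimage_expShear hKdown hg
  exact hnC (hproper C hC)

theorem eq_zero_of_expAction_eq (h : ∀ g, ¬ IsEscapeDirection ℓ K g) {g : E} {x : Fin m → ℝ}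
    (hx : {i | x i = 0} ∈ K) (hgx : expAction ℓ g x = x) : g = 0 := by
  have hfix : ∀ i, ℓ i g ≠ 0 → x i = 0 := fun i hi => by
    by_contra hxi
    exact hi (exp_eq_one_iff _ |>.1 ((mul_eq_right₀ hxi).1 (congrFun hgx i)))
  by_contra hg
  exact h g ⟨hg, ⟨_, hx, fun i hi => hfix i hi.ne'⟩, _, hx, fun i hi => hfix i hi.ne⟩

end ExpAction

section Homogenize

variable {V' : Type*} [NormedAddCommGroup V'] [NormedSpace ℝ V'] {m : ℕ}
  (γ' : Fin m → (V' →L[ℝ] ℝ)) (K : Set (Set (Fin m)))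

def homogenize (i : Fin m) : (ℝ × V') →L[ℝ] ℝ :=
  ContinuousLinearMap.fst ℝ ℝ V' + (γ' i).comp (ContinuousLinearMap.snd ℝ ℝ V')

@[simp]
theorem homogenize_apply (i : Fin m) (g : ℝ × V') : homogenize γ' i g = g.1 + γ' i g.2 :=
  rfl

noncomputable def logHomeomorph : {r : ℝ // 0 < r} ≃ₜ ℝ := Real.expOrderIso.toHomeomorph.symm

theorem logHomeomorph_apply (r : {r : ℝ // 0 < r}) : logHomeomorph r = log r :=
  (log_of_pos r.2).symm

theorem shearPos_eq_expShear_comp :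
    shearPos γ' K = expShear (homogenize γ') K ∘
      ((logHomeomorph.prodCongr (Homeomorph.refl V')).prodCongr (Homeomorph.refl (UK K))) := by
  funext ⟨⟨r, v⟩, x⟩
  refine Prod.ext (Subtype.ext (funext fun i => ?_)) rfl
  show r.1 * exp (γ' i v) * x.1 i = exp (logHomeomorph r + γ' i v) * x.1 i
  rw [logHomeomorph_apply, exp_add, exp_log r.2]

variable {γ' K}

theorem not_isEscapeDirection_homogenize
    (hK : ∀ I ∈ K, ∀ J ∈ K,
      (interior (convexHull ℝ (γ' '' Iᶜ)) ∩ interior (convexHull ℝ (γ' '' Jᶜ))).Nonempty)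
    (g : ℝ × V') : ¬ IsEscapeDirection (homogenize γ') K g := by
  obtain ⟨s, v⟩ := g
  rintro ⟨hg, ⟨I, hI, hIpos⟩, J, hJ, hJneg⟩
  have hle : ∀ w ∈ γ' '' Iᶜ, ContinuousLinearMap.apply ℝ ℝ v w ≤ -s := by
    rintro _ ⟨i, hi, rfl⟩
    by_contra! hlt
    rw [ContinuousLinearMap.apply_apply] at hlt
    exact hi (hIpos (show 0 < s + γ' i v by linarith))
  have hge : ∀ w ∈ γ' '' Jᶜ, -s ≤ ContinuousLinearMap.apply ℝ ℝ v w := by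
    rintro _ ⟨j, hj, rfl⟩
    by_contra! hlt
    rw [ContinuousLinearMap.apply_apply] at hlt
    exact hj (hJneg (show s + γ' j v < 0 by linarith))
  obtain ⟨hv, hs⟩ := eq_zero_of_forall_le_of_forall_ge (hK I hI J hJ) hle hge
  refine hg (Prod.ext (neg_eq_zero.1 hs) ?_)
  exact SeparatingDual.eq_zero_of_forall_dual_eq_zero (R := ℝ) fun w => by
    simpa using DFunLike.congr_fun hv w

variable [FiniteDimensional ℝ V']

theorem exists_isEscapeDirection_homogenize_of_separates {I J : Set (Fin m)} (hI : I ∈ K)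
    (hJ : J ∈ K) {f : (V' →L[ℝ] ℝ) →L[ℝ] ℝ} {c : ℝ} (hfc : f ≠ 0 ∨ c ≠ 0)
    (hfI : ∀ i ∉ I, f (γ' i) ≤ c) (hfJ : ∀ j ∉ J, c ≤ f (γ' j)) :
    ∃ g, IsEscapeDirection (homogenize γ') K g := by
  obtain ⟨v, rfl⟩ := NormedSpace.inclusionInDoubleDual_surjective f
  simp only [NormedSpace.dual_def] at hfI hfJ
  refine ⟨(-c, v), ?_, ⟨I, hI, fun i hi => ?_⟩, J, hJ, fun j hj => ?_⟩
  · intro h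
    obtain ⟨hc, hv⟩ := Prod.mk_eq_zero.1 h
    rw [hv, map_zero] at hfc
    exact hfc.elim (· rfl) (· (neg_eq_zero.1 hc))
  · by_contra hiI
    have := hfI i hiI
    simp only [mem_ofPred_eq, homogenize_apply] at hi
    linarith
  · by_contra hjJ
    have := hfJ j hjJ
    simp only [mem_ofPred_eq, homogenize_apply] at hj
    linarith

theorem exists_isEscapeDirection_homogenize {I J : Set (Fin m)} (hI : I ∈ K) (hJ : J ∈ K)
    (hIJ : ¬ (interior (convexHull ℝ (γ' '' Iᶜ)) ∩ interior (convexHull ℝ (γ' '' Jᶜ))).Nonempty) :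
    ∃ g, IsEscapeDirection (homogenize γ') K g := by
  have hflat : ∀ {I}, I ∈ K → ¬ (interior (convexHull ℝ (γ' '' Iᶜ))).Nonempty →
      ∃ g, IsEscapeDirection (homogenize γ') K g := fun hI hint => by
    obtain ⟨f, c, hfc, hf⟩ :=
      exists_forall_eq_of_interior_convexHull_eq_empty (not_nonempty_iff_eq_empty.1 hint)
    exact exists_isEscapeDirection_homogenize_of_separates hI hI hfc
      (fun i hi => (hf _ (mem_image_of_mem γ' hi)).le)
      fun i hi => (hf _ (mem_image_of_mem γ' hi)).ge
  by_cases hIint : (interior (convexHull ℝ (γ' '' Iᶜ))).Nonempty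
  · by_cases hJint : (interior (convexHull ℝ (γ' '' Jᶜ))).Nonempty
    · obtain ⟨f, c, hf, hfI, hfJ⟩ :=
        exists_separating_of_disjoint_interior_convexHull hIint hJint
          (disjoint_iff_inter_eq_empty.2 (not_nonempty_iff_eq_empty.1 hIJ))
      exact exists_isEscapeDirection_homogenize_of_separates hI hJ (Or.inl hf)
        (fun i hi => hfI _ (mem_image_of_mem γ' hi)) fun j hj => hfJ _ (mem_image_of_mem γ' hj)
    · exact hflat hJ hJint
  · exact hflat hI hIint

theorem forall_not_isEscapeDirection_homogenize_iff :
    (∀ g, ¬ IsEscapeDirection (homogenize γ') K g) ↔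
      ∀ I ∈ K, ∀ J ∈ K,
        (interior (convexHull ℝ (γ' '' Iᶜ)) ∩ interior (convexHull ℝ (γ' '' Jᶜ))).Nonempty :=
  ⟨fun h _ hI _ hJ => by_contra fun hIJ =>
    (exists_isEscapeDirection_homogenize hI hJ hIJ).elim h, not_isEscapeDirection_homogenize⟩

end Homogenize

theorem stmt17_general {V' : Type*} [NormedAddCommGroup V'] [NormedSpace ℝ V']
    [FiniteDimensional ℝ V'] {m : ℕ} (γ' : Fin m → (V' →L[ℝ] ℝ))
    (K : Set (Set (Fin m)))
    (hKdown : ∀ I ∈ K, ∀ J ⊆ I, J ∈ K) :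
    ((∀ C : Set (UK K × UK K), IsCompact C →
        IsCompact (shearPos γ' K ⁻¹' C)) ↔
      ∀ I ∈ K, ∀ J ∈ K,
        (interior (convexHull ℝ (γ' '' Iᶜ)) ∩
          interior (convexHull ℝ (γ' '' Jᶜ))).Nonempty) ∧
    ((∀ I ∈ K, ∀ J ∈ K,
        (interior (convexHull ℝ (γ' '' Iᶜ)) ∩
          interior (convexHull ℝ (γ' '' Jᶜ))).Nonempty) →
      ∀ (r : {r : ℝ // 0 < r}) (v' : V') (x : Fin m → ℝ), {i | x i = 0} ∈ K →
        (fun i => r.1 * Real.exp (γ' i v') * x i) = x → r.1 = 1 ∧ v' = 0) := by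
  rw [← forall_not_isEscapeDirection_homogenize_iff]
  refine ⟨?_, fun hfree r v x hx hrx => ?_⟩
  · rw [shearPos_eq_expShear_comp, ← isCompact_preimage_expShear_iff hKdown]
    simp only [preimage_comp, Homeomorph.isCompact_preimage]
  · have hfix : expAction (homogenize γ') (log r, v) x = x := by
      funext i
      simp only [expAction, homogenize_apply, exp_add, exp_log r.2]
      exact congrFun hrx i
    obtain ⟨hr, hv⟩ := Prod.mk_eq_zero.1 (eq_zero_of_expAction_eq hfree hx hfix)
    exact ⟨by rw [← exp_log r.2, hr, exp_zero], hv⟩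

/-- The shear map of the `ℝ_{>0} × V'` action on `U(K)` is
proper iff for all `I, J ∈ K` the convex hulls `conv{γ' i : i ∉ I}` and
`conv{γ' j : j ∉ J}` have a common point interior to each of them; moreover in
that case the action is free. -/
theorem stmt17 {V' : Type*} [NormedAddCommGroup V'] [NormedSpace ℝ V']
    [FiniteDimensional ℝ V'] {m : ℕ} (γ' : Fin m → (V' →L[ℝ] ℝ))
    (K : Set (Set (Fin m))) (hKempty : ∅ ∈ K)
    (hKdown : ∀ I ∈ K, ∀ J ⊆ I, J ∈ K) :
    ((∀ C : Set (UK K × UK K), IsCompact C →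
        IsCompact (shearPos γ' K ⁻¹' C)) ↔
      ∀ I ∈ K, ∀ J ∈ K,
        (interior (convexHull ℝ (γ' '' Iᶜ)) ∩
          interior (convexHull ℝ (γ' '' Jᶜ))).Nonempty) ∧
    ((∀ I ∈ K, ∀ J ∈ K,
        (interior (convexHull ℝ (γ' '' Iᶜ)) ∩
          interior (convexHull ℝ (γ' '' Jᶜ))).Nonempty) →
      ∀ (r : {r : ℝ // 0 < r}) (v' : V') (x : Fin m → ℝ), {i | x i = 0} ∈ K →
        (fun i => r.1 * Real.exp (γ' i v') * x i) = x → r.1 = 1 ∧ v' = 0) :=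
  stmt17_general γ' K hKdown
end
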